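/- arXiv:1102.2782 — 4 statements merged into one kernel-verified Lean document; each statement's English description precedes it below -/
import Mathlib

section
/- Let u, v, w be finite words over an alphabet Σ with u and w nonempty. If the bi-infinite word formed by u^{\overline{ω}} v w^{ω} (i.e., ... u u v w w ...) satisfies that u v w^2 occurs as a factor of u'^2 v' w'^2 where |u| = |u'| = |v| = |v'| = |w| = |w'| > 0, then the ω̄-ω words u^{\overline{ω}} v w^{ω} and u'^{\overline{ω}} v' w'^{ω} are isomorphic as colored linear orders. More precisely: for finite words u₁,v₁,w₁,u₂,v₂,w₂ all of the same positive length, u₁^{\overline{ω}} v₁ w₁^{ω} = u₂^{\overline{ω}} v₂ w₂^{ω} if and only if one of the following holds: (1) u₂v₂w₂² is a factor of u₁²v₁w₁²; (2) u₁v₁w₁² is a factor of u₂²v₂w₂²; (3) v₁ = w₁, u₂ = v₂, and u₂w₂² is a factor of u₁²w₁²; (4) u₁ = v₁, v₂ = w₂, and u₁w₁² is a factor of u₂²w₂². -/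
/-- The bi-infinite word `u^{ω̄} v w^{ω}` (i.e. `⋯ u u v w w ⋯`), as a `Σ`-coloring
of the linear order `ℤ`: negative positions are colored by periodic repetition of
`u` to the left, positions `0,…,|v|-1` by `v`, and the remaining positions by
periodic repetition of `w` to the right. -/
def biWord {S : Type*} [Inhabited S] (u v w : List S) : ℤ → S := fun i =>
  if i < 0 then u.getD ((i % (u.length : ℤ)).toNat) default
  else if i < (v.length : ℤ) then v.getD i.toNat default
  else w.getD (((i - (v.length : ℤ)) % (w.length : ℤ)).toNat) default

def IsFactor {S : Type*} (x y : List S) : Prop := ∃ p s : List S, y = p ++ x ++ s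

/-!
Order automorphisms of `ℤ` are translations, so the two words are isomorphic iff one is a
translate of the other. With all blocks of length `n`, the word `u^{ω̄} v w^{ω}` is
`n`-periodic on `[n, ∞)` and on `(-∞, 0)`, hence two such words coincide as soon as they agree
on an interval containing a full period of each periodic region; reading a word on an
interval of length `L` is `window`, and `u u v w w` is its window on `[-2n, 3n)`.
If the second word is translated by `0 ≤ k ≤ n`, its window `u' v' w' w'` on `[-n, 3n)` sits
inside `u u v w w`. For `k > n` the translation forces `v = w` and `u' = v'`, and then
`u' w' w'` sits inside `u u w w`; for `k > 2n` it also forces `u = v`, so the first word is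
purely periodic and `k` may be reduced modulo `n`.
-/

open Set

theorem orderIso_int_apply (e : ℤ ≃o ℤ) (i : ℤ) : e i = i + e 0 := by
  have hsucc : ∀ i, e (i + 1) = e i + 1 := fun i => by
    simpa only [Order.succ_eq_add_one] using e.map_succ i
  induction i using Int.induction_on with
  | zero => simp
  | succ i ih => rw [hsucc, ih]; ring
  | pred i ih =>
    have := hsucc (-i - 1)
    rw [sub_add_cancel, ih] at this
    linarith

theorem exists_orderIso_comp_eq_iff {α : Type*} (f g : ℤ → α) :
    (∃ e : ℤ ≃o ℤ, ∀ i, g (e i) = f i) ↔ ∃ k, (fun i => g (i + k)) = f := by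
  constructor
  · rintro ⟨e, he⟩
    exact ⟨e 0, funext fun i => by rw [← orderIso_int_apply, he]⟩
  · rintro ⟨k, rfl⟩
    exact ⟨OrderIso.addRight k, fun i => rfl⟩

section Periodicity

variable {α : Type*} {f g : ℤ → α} {m c d : ℤ}

def PeriodicOnIci (f : ℤ → α) (m c : ℤ) : Prop := ∀ i, c ≤ i → f (i + m) = f i

def PeriodicOnIio (f : ℤ → α) (m d : ℤ) : Prop := ∀ i, i < d → f (i - m) = f i

theorem PeriodicOnIci.mono (hf : PeriodicOnIci f m c) {c' : ℤ} (hc : c ≤ c') :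
    PeriodicOnIci f m c' :=
  fun i hi => hf i (hc.trans hi)

theorem PeriodicOnIio.mono (hf : PeriodicOnIio f m d) {d' : ℤ} (hd : d' ≤ d) :
    PeriodicOnIio f m d' :=
  fun i hi => hf i (hi.trans_le hd)

theorem PeriodicOnIci.comp_add_right (hf : PeriodicOnIci f m c) (k : ℤ) :
    PeriodicOnIci (fun i => f (i + k)) m (c - k) :=
  fun i hi => by simpa only [add_right_comm] using hf (i + k) (by linarith)

theorem PeriodicOnIio.comp_add_right (hf : PeriodicOnIio f m d) (k : ℤ) :
    PeriodicOnIio (fun i => f (i + k)) m (d - k) :=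
  fun i hi => by simpa only [sub_add_eq_add_sub] using hf (i + k) (by linarith)

theorem PeriodicOnIci.periodic (hf : PeriodicOnIci f m c) (hf' : PeriodicOnIio f m (c + m)) :
    Function.Periodic f m := by
  intro i
  rcases le_or_gt c i with hi | hi
  · exact hf i hi
  · simpa using (hf' (i + m) (by linarith)).symm

theorem PeriodicOnIci.eqOn_Ici (hm : 0 < m) (hf : PeriodicOnIci f m c)
    (hg : PeriodicOnIci g m c) {b : ℤ} (hb : c ≤ b) (h : EqOn f g (Ico b (b + m))) :
    EqOn f g (Ici b) := by
  have key : ∀ t : ℕ, EqOn f g (Ico b (b + t * m)) := by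
    intro t
    induction t with
    | zero => simp
    | succ t ih =>
      rintro i ⟨hbi, hi⟩
      rcases lt_or_ge i (b + m) with hi' | hi'
      · exact h ⟨hbi, hi'⟩
      · push_cast at hi
        rw [← sub_add_cancel i m, hf _ (by linarith), hg _ (by linarith)]
        exact ih ⟨by linarith, by linarith⟩
  intro i hi
  exact key ((i - b).toNat + 1) ⟨hi, by push_cast; nlinarith [Int.self_le_toNat (i - b)]⟩

theorem PeriodicOnIio.eqOn_Iio (hm : 0 < m) (hf : PeriodicOnIio f m d)
    (hg : PeriodicOnIio g m d) {a : ℤ} (ha : a ≤ d) (h : EqOn f g (Ico (a - m) a)) :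
    EqOn f g (Iio a) := by
  have key : ∀ t : ℕ, EqOn f g (Ico (a - t * m) a) := by
    intro t
    induction t with
    | zero => simp
    | succ t ih =>
      rintro i ⟨hi, hia⟩
      rcases le_or_gt (a - m) i with hi' | hi'
      · exact h ⟨hi', hia⟩
      · push_cast at hi
        rw [← add_sub_cancel_right i m, hf _ (by linarith), hg _ (by linarith)]
        exact ih ⟨by linarith, by linarith⟩
  intro i hi
  exact key ((a - i).toNat + 1) ⟨by push_cast; nlinarith [Int.self_le_toNat (a - i)], hi⟩

theorem eq_of_eqOn_Ico_of_periodicOn (hm : 0 < m) (hfi : PeriodicOnIci f m c)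
    (hgi : PeriodicOnIci g m c) (hfo : PeriodicOnIio f m d) (hgo : PeriodicOnIio g m d)
    {a b : ℤ} (hc : c + m ≤ b) (hd : a + m ≤ d) (hab : a + m ≤ b) (h : EqOn f g (Ico a b)) :
    f = g := by
  funext i
  rcases le_or_gt (b - m) i with hi | hi
  · refine hfi.eqOn_Ici hm hgi (by linarith) (h.mono ?_) hi
    exact Ico_subset_Ico (by linarith) (by linarith)
  rcases lt_or_ge i (a + m) with hi' | hi'
  · refine hfo.eqOn_Iio hm hgo hd (h.mono ?_) hi'
    exact Ico_subset_Ico (by linarith) (by linarith)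
  · exact h ⟨by linarith, by linarith⟩

end Periodicity

section Window

variable {α : Type*} {f g : ℤ → α} {a b k m c d : ℤ} {L M : ℕ}

def window (f : ℤ → α) (a : ℤ) (L : ℕ) : List α :=
  (List.range L).map fun j : ℕ => f (a + j)

@[simp]
theorem length_window : (window f a L).length = L := by simp [window]

@[simp]
theorem getElem_window {j : ℕ} (hj : j < (window f a L).length) :
    (window f a L)[j] = f (a + j) := by simp [window]

theorem window_add (L₁ L₂ : ℕ) :
    window f a (L₁ + L₂) = window f a L₁ ++ window f (a + L₁) L₂ := by
  simp only [window, List.range_add, List.map_append, List.map_map]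
  congr 2
  funext j
  simp [add_assoc]

theorem window_comp_add_right : window (fun i => f (i + k)) a L = window f (a + k) L := by
  simp only [window, add_right_comm]

theorem window_eq_of_comp_add_right_eq (h : (fun i => g (i + k)) = f) (a : ℤ) (L : ℕ) :
    window f a L = window g (a + k) L :=
  h ▸ window_comp_add_right

theorem comp_add_right_eq_symm (h : (fun i => g (i + k)) = f) : (fun i => f (i + -k)) = g :=
  h ▸ funext fun i => by simp

theorem eqOn_of_window_eq (h : window f a L = window g a L) : EqOn f g (Ico a (a + L)) := by
  rintro i ⟨hai, hi⟩
  obtain ⟨j, rfl⟩ : ∃ j : ℕ, i = a + j := ⟨(i - a).toNat, by omega⟩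
  have hj : j < (window f a L).length := by simp only [length_window]; omega
  simpa using List.getElem_of_eq h hj

theorem isFactor_window (hba : b ≤ a) (h : a + L ≤ b + M) :
    IsFactor (window f a L) (window f b M) := by
  obtain ⟨p, rfl⟩ : ∃ p : ℕ, a = b + p := ⟨(a - b).toNat, by omega⟩
  obtain ⟨s, rfl⟩ : ∃ s : ℕ, M = p + L + s := ⟨M - p - L, by omega⟩
  refine ⟨window f b p, window f (b + p + L) s, ?_⟩
  rw [window_add, window_add, Nat.cast_add, add_assoc]

theorem exists_window_eq_of_isFactor {l : List α} (h : IsFactor l (window f b M)) :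
    ∃ p : ℕ, p + l.length ≤ M ∧ window f (b + p) l.length = l := by
  obtain ⟨pre, suf, hpre⟩ := h
  have hM : M = pre.length + l.length + suf.length := by
    simpa [add_assoc] using congrArg List.length hpre
  refine ⟨pre.length, by omega, ?_⟩
  rw [hM, window_add, window_add] at hpre
  exact (List.append_inj (List.append_inj hpre (by simp)).1 (by simp)).2

theorem PeriodicOnIci.window_add_eq (hf : PeriodicOnIci f m c) (ha : c ≤ a) :
    window f (a + m) L = window f a L := by
  simp only [window]
  congr 1
  funext j
  rw [add_right_comm, hf _ (by omega)]

theorem PeriodicOnIio.window_sub_eq (hf : PeriodicOnIio f m d) (ha : a + L ≤ d) :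
    window f (a - m) L = window f a L := by
  apply List.ext_getElem (by simp)
  intro j hj _
  simp only [getElem_window, sub_add_eq_add_sub]
  exact hf _ (by simp at hj; omega)

theorem Function.Periodic.isFactor_window_add {n : ℕ} (hf : Function.Periodic f n) (hn : 0 < n)
    (a b : ℤ) (L : ℕ) :
    IsFactor (window f a L) (window f b (L + n)) := by
  have hshift : window f a L = window f (b + (a - b) % n) L := by
    simp only [window]
    congr 1
    funext j
    rw [← hf.sub_int_mul_eq ((a - b) / n), Int.cast_id]
    congr 1
    linear_combination (-1 : ℤ) * Int.mul_ediv_add_emod (a - b) n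
  rw [hshift]
  have h0 := Int.emod_nonneg (a - b) (by omega : (n : ℤ) ≠ 0)
  have h1 := Int.emod_lt_of_pos (a - b) (by omega : (0 : ℤ) < n)
  refine isFactor_window ?_ ?_ <;> push_cast <;> linarith

end Window

section BiWord

variable {S : Type*} [Inhabited S] {u v w : List S} {n : ℕ}

theorem biWord_periodicOnIci (hv : v.length = n) (hw : w.length = n) :
    PeriodicOnIci (biWord u v w) n n := by
  intro i hi
  simp only [biWord, hv, hw]
  rw [if_neg (by omega), if_neg (by omega), if_neg (by omega), if_neg (by omega)]
  simp

theorem biWord_periodicOnIio (hu : u.length = n) : PeriodicOnIio (biWord u v w) n 0 := by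
  intro i hi
  simp only [biWord, hu]
  rw [if_pos (by omega), if_pos hi]
  simp

theorem biWord_periodicOnIci_zero (hw : w.length = n) : PeriodicOnIci (biWord u w w) n 0 := by
  intro i hi
  rcases le_or_gt (n : ℤ) i with hin | hin
  · exact biWord_periodicOnIci hw hw i hin
  simp only [biWord, hw]
  rw [if_neg (by omega), if_neg (by omega), if_neg (by omega), if_pos hin]
  simp [Int.emod_eq_of_lt hi hin]

theorem biWord_periodicOnIio_length (hv : v.length = n) : PeriodicOnIio (biWord v v w) n n := by
  intro i hi
  rcases lt_or_ge i 0 with hi0 | hi0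
  · exact biWord_periodicOnIio hv i hi0
  simp only [biWord, hv]
  rw [if_pos (by omega), if_neg (by omega), if_pos hi]
  simp [Int.emod_eq_of_lt hi0 hi]

theorem window_biWord_neg (hu : u.length = n) : window (biWord u v w) (-n) n = u := by
  refine List.ext_getElem (by simp [hu]) fun j hj hju => ?_
  simp only [length_window] at hj
  simp only [getElem_window, biWord, hu]
  rw [if_pos (by omega), ← List.getD_eq_getElem u default hju]
  congr
  rw [neg_add_eq_sub, Int.sub_emod, Int.emod_self, sub_zero, Int.emod_emod_of_dvd _ dvd_rfl,
    Int.emod_eq_of_lt (by omega) (by omega)]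
  simp

theorem window_biWord_zero (hv : v.length = n) : window (biWord u v w) 0 n = v := by
  refine List.ext_getElem (by simp [hv]) fun j hj hjv => ?_
  simp only [length_window] at hj
  simp only [getElem_window, biWord, hv]
  rw [if_neg (by omega), if_pos (by omega), ← List.getD_eq_getElem v default hjv]
  simp

theorem window_biWord_length (hv : v.length = n) (hw : w.length = n) :
    window (biWord u v w) n n = w := by
  refine List.ext_getElem (by simp [hw]) fun j hj hjw => ?_
  simp only [length_window] at hj
  simp only [getElem_window, biWord, hv, hw]
  rw [if_neg (by omega), if_neg (by omega), ← List.getD_eq_getElem w default hjw]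
  simp [Int.emod_eq_of_lt (by omega : (0 : ℤ) ≤ j) (by omega : (j : ℤ) < n)]

theorem window_biWord_neg_sub (hu : u.length = n) : window (biWord u v w) (-n - n) n = u := by
  rw [(biWord_periodicOnIio hu).window_sub_eq (by simp), window_biWord_neg hu]

theorem window_biWord_length_add (hv : v.length = n) (hw : w.length = n) :
    window (biWord u v w) (n + n) n = w := by
  rw [(biWord_periodicOnIci hv hw).window_add_eq le_rfl, window_biWord_length hv hw]

theorem window_biWord_uuvww (hu : u.length = n) (hv : v.length = n) (hw : w.length = n) :
    window (biWord u v w) (-2 * n) (5 * n) = u ++ u ++ v ++ w ++ w := by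
  rw [show 5 * n = n + (n + (n + (n + n))) by ring, show -2 * (n : ℤ) = -n - n by ring]
  simp only [window_add, sub_add_cancel, neg_add_cancel, zero_add, window_biWord_neg_sub hu,
    window_biWord_neg hu, window_biWord_zero hv, window_biWord_length hv hw,
    window_biWord_length_add hv hw, List.append_assoc]

theorem window_biWord_uvww (hu : u.length = n) (hv : v.length = n) (hw : w.length = n) :
    window (biWord u v w) (-n) (4 * n) = u ++ v ++ w ++ w := by
  rw [show 4 * n = n + (n + (n + n)) by ring]
  simp only [window_add, neg_add_cancel, zero_add, window_biWord_neg hu, window_biWord_zero hv,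
    window_biWord_length hv hw, window_biWord_length_add hv hw, List.append_assoc]

theorem window_biWord_uuvw (hu : u.length = n) (hv : v.length = n) (hw : w.length = n) :
    window (biWord u v w) (-2 * n) (4 * n) = u ++ u ++ v ++ w := by
  rw [show 4 * n = n + (n + (n + n)) by ring, show -2 * (n : ℤ) = -n - n by ring]
  simp only [window_add, sub_add_cancel, neg_add_cancel, zero_add, window_biWord_neg_sub hu,
    window_biWord_neg hu, window_biWord_zero hv, window_biWord_length hv hw, List.append_assoc]

theorem window_biWord_vww (hv : v.length = n) (hw : w.length = n) :
    window (biWord u v w) 0 (3 * n) = v ++ w ++ w := by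
  rw [show 3 * n = n + (n + n) by ring]
  simp only [window_add, zero_add, window_biWord_zero hv, window_biWord_length hv hw,
    window_biWord_length_add hv hw, List.append_assoc]

end BiWord

section Shift

variable {S : Type*} [Inhabited S] {u v w u' v' w' : List S} {n : ℕ} {k : ℤ}

theorem middle_eq_right_of_biWord_shift (hv : v.length = n) (hw : w.length = n)
    (hv' : v'.length = n) (hw' : w'.length = n) (hk : n ≤ k)
    (h : (fun i => biWord u' v' w' (i + k)) = biWord u v w) : v = w :=
  calc v = window (biWord u v w) 0 n := (window_biWord_zero hv).symm
    _ = window (biWord u' v' w') k n := by rw [window_eq_of_comp_add_right_eq h, zero_add]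
    _ = window (biWord u' v' w') (k + n) n :=
      ((biWord_periodicOnIci hv' hw').window_add_eq hk).symm
    _ = window (biWord u v w) n n := by rw [window_eq_of_comp_add_right_eq h, add_comm]
    _ = w := window_biWord_length hv hw

theorem shifted_left_eq_middle_of_biWord_shift (hu : u.length = n) (hu' : u'.length = n)
    (hv' : v'.length = n) (hk : n ≤ k)
    (h : (fun i => biWord u' v' w' (i + k)) = biWord u v w) : u' = v' :=
  calc u' = window (biWord u' v' w') (-n) n := (window_biWord_neg hu').symm
    _ = window (biWord u v w) (-k - n) n := by
      rw [window_eq_of_comp_add_right_eq h]; ring_nf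
    _ = window (biWord u v w) (-k) n := (biWord_periodicOnIio hu).window_sub_eq (by omega)
    _ = window (biWord u' v' w') 0 n := by rw [window_eq_of_comp_add_right_eq h, neg_add_cancel]
    _ = v' := window_biWord_zero hv'

theorem left_eq_middle_of_biWord_shift (hu : u.length = n) (hv : v.length = n)
    (hv' : v'.length = n) (hw' : w'.length = n) (hk : 2 * n ≤ k)
    (h : (fun i => biWord u' v' w' (i + k)) = biWord u v w) : u = v :=
  calc u = window (biWord u v w) (-n) n := (window_biWord_neg hu).symm
    _ = window (biWord u' v' w') (-n + k) n := window_eq_of_comp_add_right_eq h _ _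
    _ = window (biWord u' v' w') (-n + k + n) n :=
      ((biWord_periodicOnIci hv' hw').window_add_eq (by omega)).symm
    _ = window (biWord u v w) 0 n := by rw [window_eq_of_comp_add_right_eq h]; ring_nf
    _ = v := window_biWord_zero hv

theorem isFactor_of_biWord_shift (hn : 0 < n) (hu : u.length = n) (hv : v.length = n)
    (hw : w.length = n) (hu' : u'.length = n) (hv' : v'.length = n) (hw' : w'.length = n)
    (hk : 0 ≤ k) (h : (fun i => biWord u' v' w' (i + k)) = biWord u v w) :
    IsFactor (u' ++ v' ++ w' ++ w') (u ++ u ++ v ++ w ++ w) ∨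
      v = w ∧ u' = v' ∧ IsFactor (u' ++ w' ++ w') (u ++ u ++ w ++ w) := by
  rcases le_or_gt k n with hkn | hkn
  · left
    rw [← window_biWord_uvww hu' hv' hw', ← window_biWord_uuvww hu hv hw,
      show -(n : ℤ) = -n - k + k by ring, ← window_eq_of_comp_add_right_eq h]
    exact isFactor_window (by linarith) (by push_cast; linarith)
  have hvw := middle_eq_right_of_biWord_shift hv hw hv' hw' hkn.le h
  have hu'v' := shifted_left_eq_middle_of_biWord_shift hu hu' hv' hkn.le h
  refine Or.inr ⟨hvw, hu'v', ?_⟩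
  subst w v'
  rw [← window_biWord_vww hu' hw', ← window_biWord_uuvw hu hv hv,
    show (0 : ℤ) = -k + k by ring, ← window_eq_of_comp_add_right_eq h]
  rcases le_or_gt k (2 * n) with hk2 | hk2
  · exact isFactor_window (by linarith) (by push_cast; linarith)
  obtain rfl := left_eq_middle_of_biWord_shift hu hv hu' hw' hk2.le h
  rw [show 4 * n = 3 * n + n by ring]
  exact ((biWord_periodicOnIci_zero hu).periodic (by simpa using biWord_periodicOnIio_length hu))
    |>.isFactor_window_add hn _ _ _

theorem biWord_shift_of_isFactor_uvww (hn : 0 < n) (hu : u.length = n) (hv : v.length = n)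
    (hw : w.length = n) (hu' : u'.length = n) (hv' : v'.length = n) (hw' : w'.length = n)
    (h : IsFactor (u' ++ v' ++ w' ++ w') (u ++ u ++ v ++ w ++ w)) :
    ∃ k, (fun i => biWord u' v' w' (i + k)) = biWord u v w := by
  rw [← window_biWord_uvww hu' hv' hw', ← window_biWord_uuvww hu hv hw] at h
  obtain ⟨p, hp, hpw⟩ := exists_window_eq_of_isFactor h
  rw [length_window] at hp hpw
  have hagree : EqOn (biWord u v w) (fun i => biWord u' v' w' (i + (n - p)))
      (Ico (-2 * n + p) (-2 * n + p + ↑(4 * n))) := by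
    refine eqOn_of_window_eq ?_
    rw [hpw, window_comp_add_right]
    ring_nf
  refine ⟨n - p, (eq_of_eqOn_Ico_of_periodicOn (d := p - n) (Nat.cast_pos.2 hn)
    (biWord_periodicOnIci hv hw)
    (((biWord_periodicOnIci hv' hw').comp_add_right _).mono (by omega))
    ((biWord_periodicOnIio hu).mono (by omega))
    (((biWord_periodicOnIio hu').comp_add_right _).mono (by omega))
    (by push_cast; omega) (by omega) (by push_cast; omega) hagree).symm⟩

theorem biWord_shift_of_isFactor_uww (hn : 0 < n) (hu : u.length = n) (hw : w.length = n)
    (hu' : u'.length = n) (hw' : w'.length = n)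
    (h : IsFactor (u' ++ w' ++ w') (u ++ u ++ w ++ w)) :
    ∃ k, (fun i => biWord u' u' w' (i + k)) = biWord u w w := by
  rw [← window_biWord_vww hu' hw' (u := u'), ← window_biWord_uuvw hu hw hw] at h
  obtain ⟨p, hp, hpw⟩ := exists_window_eq_of_isFactor h
  rw [length_window] at hp hpw
  have hagree : EqOn (biWord u w w) (fun i => biWord u' u' w' (i + (2 * n - p)))
      (Ico (-2 * n + p) (-2 * n + p + ↑(3 * n))) := by
    refine eqOn_of_window_eq ?_
    rw [hpw, window_comp_add_right]
    ring_nf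
  refine ⟨2 * n - p, (eq_of_eqOn_Ico_of_periodicOn (d := p - n) (Nat.cast_pos.2 hn)
    (biWord_periodicOnIci_zero hw)
    (((biWord_periodicOnIci hu' hw').comp_add_right _).mono (by omega))
    ((biWord_periodicOnIio hu).mono (by omega))
    (((biWord_periodicOnIio_length hu').comp_add_right _).mono (by omega))
    (by push_cast; omega) (by omega) (by push_cast; omega) hagree).symm⟩

end Shift

/-- For finite words `u₁,v₁,w₁,u₂,v₂,w₂` all of the same positive length,
`u₁^{ω̄} v₁ w₁^{ω} = u₂^{ω̄} v₂ w₂^{ω}` (isomorphism of the `ℤ`-indexed colored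
linear orders) if and only if one of the four factor conditions holds. -/
theorem biinfinite_word_eq_iff_factor {S : Type*} [Inhabited S]
    (u₁ v₁ w₁ u₂ v₂ w₂ : List S) (n : ℕ) (hn : 0 < n)
    (hu₁ : u₁.length = n) (hv₁ : v₁.length = n) (hw₁ : w₁.length = n)
    (hu₂ : u₂.length = n) (hv₂ : v₂.length = n) (hw₂ : w₂.length = n) :
    (∃ e : ℤ ≃o ℤ, ∀ i : ℤ, biWord u₂ v₂ w₂ (e i) = biWord u₁ v₁ w₁ i) ↔
      (IsFactor (u₂ ++ v₂ ++ w₂ ++ w₂) (u₁ ++ u₁ ++ v₁ ++ w₁ ++ w₁) ∨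
       IsFactor (u₁ ++ v₁ ++ w₁ ++ w₁) (u₂ ++ u₂ ++ v₂ ++ w₂ ++ w₂) ∨
       (v₁ = w₁ ∧ u₂ = v₂ ∧ IsFactor (u₂ ++ w₂ ++ w₂) (u₁ ++ u₁ ++ w₁ ++ w₁)) ∨
       (u₁ = v₁ ∧ v₂ = w₂ ∧ IsFactor (u₁ ++ w₁ ++ w₁) (u₂ ++ u₂ ++ w₂ ++ w₂))) := by
  rw [exists_orderIso_comp_eq_iff]
  constructor
  · rintro ⟨k, hk⟩
    rcases le_total 0 k with hk0 | hk0
    · rcases isFactor_of_biWord_shift hn hu₁ hv₁ hw₁ hu₂ hv₂ hw₂ hk0 hk with h | h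
      exacts [Or.inl h, Or.inr (Or.inr (Or.inl h))]
    · rcases isFactor_of_biWord_shift hn hu₂ hv₂ hw₂ hu₁ hv₁ hw₁ (neg_nonneg.2 hk0)
        (comp_add_right_eq_symm hk) with h | ⟨hvw, huv, h⟩
      exacts [Or.inr (Or.inl h), Or.inr (Or.inr (Or.inr ⟨huv, hvw, h⟩))]
  · rintro (h | h | ⟨rfl, rfl, h⟩ | ⟨rfl, rfl, h⟩)
    · exact biWord_shift_of_isFactor_uvww hn hu₁ hv₁ hw₁ hu₂ hv₂ hw₂ h
    · obtain ⟨k, hk⟩ := biWord_shift_of_isFactor_uvww hn hu₂ hv₂ hw₂ hu₁ hv₁ hw₁ h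
      exact ⟨-k, comp_add_right_eq_symm hk⟩
    · exact biWord_shift_of_isFactor_uww hn hu₁ hw₁ hu₂ hw₂ h
    · obtain ⟨k, hk⟩ := biWord_shift_of_isFactor_uww hn hu₂ hw₂ hu₁ hw₁ h
      exact ⟨-k, comp_add_right_eq_symm hk⟩
end

section
/- For any finite nonempty set Γ ⊆ Σ and any a ∈ Γ: (a Γ^{η})^{ω} ≅ a Γ^{η} and (Γ^{η} a)^{\overline{ω}} ≅ Γ^{η} a. -/
/-!
Both sides of each isomorphism are countable linear orders with a least (resp. greatest) point
colored `a`, no greatest (resp. least) point, and in which every color of `Γ` occurs between any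
two points. Removing the endpoint leaves countable orders without endpoints in which every color
is dense; a colored version of Cantor's back-and-forth argument makes these isomorphic, and the
isomorphism extends across the endpoints.
-/

/-- `c : ℚ → S` is the dense `Γ`-coloring of the rationals (the word `Γ^η`). -/
def GammaEta {S : Type*} (Γ : Finset S) (c : ℚ → S) : Prop :=
  (∀ x, c x ∈ Γ) ∧ ∀ q r : ℚ, q < r → ∀ a ∈ Γ, ∃ x : ℚ, q < x ∧ x < r ∧ c x = a

/-- Isomorphism of colored linear orders. -/
def ColoredIso {α β S : Type*} [LinearOrder α] [LinearOrder β]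
    (cα : α → S) (cβ : β → S) : Prop :=
  ∃ e : α ≃o β, ∀ x, cβ (e x) = cα x

instance Lex.countable {α : Type*} [Countable α] : Countable (Lex α) := ‹Countable α›

instance OrderDual.countable {α : Type*} [Countable α] : Countable αᵒᵈ := ‹Countable α›

section

variable {S ι α β : Type*} [LinearOrder α] [LinearOrder β]

structure IsDenseColoring (P : Set S) (c : α → S) : Prop where
  mem : ∀ x, c x ∈ P
  exists_between : ∀ {x y : α}, x < y → ∀ s ∈ P, ∃ m, x < m ∧ m < y ∧ c m = s

theorem GammaEta.isDenseColoring {Γ : Finset S} {c : ℚ → S} (h : GammaEta Γ c) :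
    IsDenseColoring (Γ : Set S) c :=
  ⟨h.1, fun hxy s hs => h.2 _ _ hxy s hs⟩

namespace IsDenseColoring

variable {P : Set S} {c : α → S}

theorem denselyOrdered (hc : IsDenseColoring P c) : DenselyOrdered α :=
  ⟨fun x _ hxy =>
    let ⟨m, hxm, hmy, _⟩ := hc.exists_between hxy (c x) (hc.mem x)
    ⟨m, hxm, hmy⟩⟩

theorem exists_gt [NoMaxOrder α] (hc : IsDenseColoring P c) (x : α) {s : S} (hs : s ∈ P) :
    ∃ m, x < m ∧ c m = s :=
  let ⟨_, hxy⟩ := NoMaxOrder.exists_gt x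
  let ⟨m, hxm, _, hm⟩ := hc.exists_between hxy s hs
  ⟨m, hxm, hm⟩

theorem exists_lt [NoMinOrder α] (hc : IsDenseColoring P c) (x : α) {s : S} (hs : s ∈ P) :
    ∃ m, m < x ∧ c m = s :=
  let ⟨_, hyx⟩ := NoMinOrder.exists_lt x
  let ⟨m, _, hmx, hm⟩ := hc.exists_between hyx s hs
  ⟨m, hmx, hm⟩

theorem exists_between_finsets [NoMinOrder α] [NoMaxOrder α] [Nonempty α]
    (hc : IsDenseColoring P c) (lo hi : Finset α) (lo_lt_hi : ∀ x ∈ lo, ∀ y ∈ hi, x < y)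
    {s : S} (hs : s ∈ P) : ∃ m, (∀ x ∈ lo, x < m) ∧ (∀ y ∈ hi, m < y) ∧ c m = s := by
  have := hc.denselyOrdered
  -- interpolate twice, so that the nonempty gap `(l, u)` between `lo` and `hi` carries the color
  obtain ⟨u, lo_lt_u, u_lt_hi⟩ := Order.exists_between_finsets lo hi lo_lt_hi
  obtain ⟨l, lo_lt_l, l_lt_u⟩ :=
    Order.exists_between_finsets lo {u} (by simpa only [Finset.mem_singleton, forall_eq])
  obtain ⟨m, hlm, hmu, hm⟩ := hc.exists_between (l_lt_u u (Finset.mem_singleton_self u)) s hs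
  exact ⟨m, fun x hx => (lo_lt_l x hx).trans hlm, fun y hy => hmu.trans (u_lt_hi y hy), hm⟩

theorem restrict_Ioi (hc : IsDenseColoring P c) (a : α) :
    IsDenseColoring P (fun x : Set.Ioi a => c x) where
  mem x := hc.mem x
  exists_between {x _} hxy s hs :=
    let ⟨m, hxm, hmy, hm⟩ := hc.exists_between hxy s hs
    ⟨⟨m, x.2.trans hxm⟩, hxm, hmy, hm⟩

theorem dual (hc : IsDenseColoring P c) : IsDenseColoring P (c ∘ OrderDual.ofDual) where
  mem x := hc.mem x.ofDual
  exists_between hxy s hs :=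
    let ⟨m, hym, hmx, hm⟩ := hc.exists_between hxy s hs
    ⟨OrderDual.toDual m, hmx, hym, hm⟩

theorem of_subsingleton [Subsingleton α] {s : S} (hs : s ∈ P) :
    IsDenseColoring P (fun _ : α => s) where
  mem _ := hs
  exists_between {x y} hxy := absurd hxy (Subsingleton.elim x y ▸ lt_irrefl x)

section SumLex

variable {cα : α → S} {cβ : β → S}

private theorem sumLex_of_between_inl_inr (hα : IsDenseColoring P cα)
    (hβ : IsDenseColoring P cβ)
    (between_inl_inr : ∀ (x : α) (y : β) s, s ∈ P → ∃ m : α ⊕ₗ β,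
      toLex (Sum.inl x) < m ∧ m < toLex (Sum.inr y) ∧ Sum.elim cα cβ (ofLex m) = s) :
    IsDenseColoring P (fun z : α ⊕ₗ β => Sum.elim cα cβ (ofLex z)) where
  mem
    | .inl x => hα.mem x
    | .inr y => hβ.mem y
  exists_between {z z'} hzz' s hs := by
    rcases z with x | y <;> rcases z' with x' | y'
    · obtain ⟨m, h₁, h₂, hm⟩ := hα.exists_between (Sum.Lex.inl_lt_inl_iff.1 hzz') s hs
      exact ⟨toLex (.inl m), Sum.Lex.inl_lt_inl_iff.2 h₁, Sum.Lex.inl_lt_inl_iff.2 h₂, hm⟩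
    · exact between_inl_inr x y' s hs
    · exact absurd hzz' Sum.Lex.not_inr_lt_inl
    · obtain ⟨m, h₁, h₂, hm⟩ := hβ.exists_between (Sum.Lex.inr_lt_inr_iff.1 hzz') s hs
      exact ⟨toLex (.inr m), Sum.Lex.inr_lt_inr_iff.2 h₁, Sum.Lex.inr_lt_inr_iff.2 h₂, hm⟩

theorem sumLex_of_noMinOrder [NoMinOrder β] (hα : IsDenseColoring P cα)
    (hβ : IsDenseColoring P cβ) :
    IsDenseColoring P (fun z : α ⊕ₗ β => Sum.elim cα cβ (ofLex z)) :=
  sumLex_of_between_inl_inr hα hβ fun _ y _ hs =>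
    let ⟨m, hmy, hm⟩ := hβ.exists_lt y hs
    ⟨toLex (.inr m), Sum.Lex.inl_lt_inr _ _, Sum.Lex.inr_lt_inr_iff.2 hmy, hm⟩

theorem sumLex_of_noMaxOrder [NoMaxOrder α] (hα : IsDenseColoring P cα)
    (hβ : IsDenseColoring P cβ) :
    IsDenseColoring P (fun z : α ⊕ₗ β => Sum.elim cα cβ (ofLex z)) :=
  sumLex_of_between_inl_inr hα hβ fun x _ _ hs =>
    let ⟨m, hxm, hm⟩ := hα.exists_gt x hs
    ⟨toLex (.inl m), Sum.Lex.inl_lt_inl_iff.2 hxm, Sum.Lex.inl_lt_inr _ _, hm⟩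

end SumLex

section ProdLex

variable {c : ι → β → S}

private theorem prodLex_of_between_of_lt [LinearOrder ι] (hc : ∀ i, IsDenseColoring P (c i))
    (between_of_lt : ∀ (i j : ι) (x y : β) s, i < j → s ∈ P → ∃ m : ι ×ₗ β,
      toLex (i, x) < m ∧ m < toLex (j, y) ∧ c (ofLex m).1 (ofLex m).2 = s) :
    IsDenseColoring P (fun z : ι ×ₗ β => c (ofLex z).1 (ofLex z).2) where
  mem z := (hc _).mem _
  exists_between {z z'} hzz' s hs := by
    obtain ⟨i, x⟩ := z
    obtain ⟨j, y⟩ := z'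
    rcases Prod.Lex.toLex_lt_toLex.1 hzz' with hij | ⟨rfl, hxy⟩
    · exact between_of_lt i j x y s hij hs
    · obtain ⟨m, h₁, h₂, hm⟩ := (hc i).exists_between hxy s hs
      exact ⟨toLex (i, m), Prod.Lex.toLex_lt_toLex.2 (.inr ⟨rfl, h₁⟩),
        Prod.Lex.toLex_lt_toLex.2 (.inr ⟨rfl, h₂⟩), hm⟩

theorem prodLex_of_noMaxOrder [LinearOrder ι] [NoMaxOrder β]
    (hc : ∀ i, IsDenseColoring P (c i)) :
    IsDenseColoring P (fun z : ι ×ₗ β => c (ofLex z).1 (ofLex z).2) :=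
  prodLex_of_between_of_lt hc fun i _ x _ _ hij hs =>
    let ⟨m, hxm, hm⟩ := (hc i).exists_gt x hs
    ⟨toLex (i, m), Prod.Lex.toLex_lt_toLex.2 (.inr ⟨rfl, hxm⟩),
      Prod.Lex.toLex_lt_toLex.2 (.inl hij), hm⟩

theorem prodLex_of_noMinOrder [LinearOrder ι] [NoMinOrder β]
    (hc : ∀ i, IsDenseColoring P (c i)) :
    IsDenseColoring P (fun z : ι ×ₗ β => c (ofLex z).1 (ofLex z).2) :=
  prodLex_of_between_of_lt hc fun _ j _ y _ hij hs =>
    let ⟨m, hmy, hm⟩ := (hc j).exists_lt y hs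
    ⟨toLex (j, m), Prod.Lex.toLex_lt_toLex.2 (.inl hij),
      Prod.Lex.toLex_lt_toLex.2 (.inr ⟨rfl, hmy⟩), hm⟩

end ProdLex

end IsDenseColoring

def ColoredPartialIso (cα : α → S) (cβ : β → S) : Type _ :=
  { f : Finset (α × β) //
    (∀ p ∈ f, cβ p.2 = cα p.1) ∧ ∀ p ∈ f, ∀ q ∈ f, cmp p.1 q.1 = cmp p.2 q.2 }

namespace ColoredPartialIso

variable {P : Set S} {cα : α → S} {cβ : β → S}

instance : Preorder (ColoredPartialIso cα cβ) := Subtype.preorder _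

instance : Inhabited (ColoredPartialIso cα cβ) := ⟨⟨∅, by simp, by simp⟩⟩

def symm (f : ColoredPartialIso cα cβ) : ColoredPartialIso cβ cα :=
  ⟨f.1.image Prod.swap, Finset.forall_mem_image.2 fun p hp => (f.2.1 p hp).symm,
    Finset.forall_mem_image.2 fun p hp =>
      Finset.forall_mem_image.2 fun q hq => (f.2.2 p hp q hq).symm⟩

def extend (f : ColoredPartialIso cα cβ) (x : α) (y : β) (hxy : cβ y = cα x)
    (hf : ∀ p ∈ f.1, cmp p.1 x = cmp p.2 y) : ColoredPartialIso cα cβ :=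
  ⟨insert (x, y) f.1, by simpa [hxy] using f.2.1, by
    simp only [Finset.mem_insert, forall_eq_or_imp, cmp_self_eq_eq, true_and]
    refine ⟨fun q hq => ?_, fun p hp => ⟨hf p hp, f.2.2 p hp⟩⟩
    rw [cmp_eq_cmp_symm]
    exact hf q hq⟩

theorem exists_across [NoMinOrder β] [NoMaxOrder β] [Nonempty β] (hα : ∀ x, cα x ∈ P)
    (hβ : IsDenseColoring P cβ) (f : ColoredPartialIso cα cβ) (x : α) :
    ∃ y, cβ y = cα x ∧ ∀ p ∈ f.1, cmp p.1 x = cmp p.2 y := by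
  by_cases hx : ∃ y, (x, y) ∈ f.1
  · obtain ⟨y, hy⟩ := hx
    exact ⟨y, f.2.1 _ hy, fun p hp => f.2.2 p hp _ hy⟩
  have lo_lt_hi : ∀ u ∈ {p ∈ f.1 | p.1 < x}.image Prod.snd,
      ∀ v ∈ {p ∈ f.1 | x < p.1}.image Prod.snd, u < v := by
    simp only [Finset.mem_image, Finset.mem_filter]
    rintro _ ⟨p, ⟨hp, hpx⟩, rfl⟩ _ ⟨q, ⟨hq, hxq⟩, rfl⟩
    rw [← lt_iff_lt_of_cmp_eq_cmp (f.2.2 p hp q hq)]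
    exact hpx.trans hxq
  obtain ⟨y, lo_lt_y, y_lt_hi, hy⟩ := hβ.exists_between_finsets _ _ lo_lt_hi (hα x)
  refine ⟨y, hy, fun p hp => ?_⟩
  have hpx : p.1 ≠ x := fun h => hx ⟨p.2, h ▸ hp⟩
  rcases hpx.lt_or_gt with hpx | hxp
  · have : p.2 < y := lo_lt_y _ (Finset.mem_image_of_mem _ (Finset.mem_filter.2 ⟨hp, hpx⟩))
    rw [(cmp_eq_lt_iff _ _).2 hpx, (cmp_eq_lt_iff _ _).2 this]
  · have : y < p.2 := y_lt_hi _ (Finset.mem_image_of_mem _ (Finset.mem_filter.2 ⟨hp, hxp⟩))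
    rw [(cmp_eq_gt_iff _ _).2 hxp, (cmp_eq_gt_iff _ _).2 this]

theorem exists_across_symm [NoMinOrder α] [NoMaxOrder α] [Nonempty α]
    (hα : IsDenseColoring P cα) (hβ : ∀ y, cβ y ∈ P) (f : ColoredPartialIso cα cβ) (y : β) :
    ∃ x, cβ y = cα x ∧ ∀ p ∈ f.1, cmp p.1 x = cmp p.2 y :=
  let ⟨x, hxy, hx⟩ := f.symm.exists_across hβ hα y
  ⟨x, hxy.symm, fun p hp => (hx p.swap (Finset.mem_image_of_mem _ hp)).symm⟩

def definedAtLeft [NoMinOrder β] [NoMaxOrder β] [Nonempty β] (hα : ∀ x, cα x ∈ P)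
    (hβ : IsDenseColoring P cβ) (x : α) : Order.Cofinal (ColoredPartialIso cα cβ) where
  carrier := {f | ∃ y, (x, y) ∈ f.1}
  isCofinal f :=
    let ⟨y, hxy, hf⟩ := exists_across hα hβ f x
    ⟨f.extend x y hxy hf, ⟨y, Finset.mem_insert_self _ _⟩, Finset.subset_insert (s := f.1) _⟩

def definedAtRight [NoMinOrder α] [NoMaxOrder α] [Nonempty α] (hα : IsDenseColoring P cα)
    (hβ : ∀ y, cβ y ∈ P) (y : β) : Order.Cofinal (ColoredPartialIso cα cβ) where
  carrier := {f | ∃ x, (x, y) ∈ f.1}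
  isCofinal f :=
    let ⟨x, hxy, hf⟩ := exists_across_symm hα hβ f y
    ⟨f.extend x y hxy hf, ⟨x, Finset.mem_insert_self _ _⟩, Finset.subset_insert (s := f.1) _⟩

end ColoredPartialIso

namespace ColoredIso

variable {P : Set S} {cα : α → S} {cβ : β → S}

theorem of_isDenseColoring [Countable α] [NoMinOrder α] [NoMaxOrder α] [Nonempty α]
    [Countable β] [NoMinOrder β] [NoMaxOrder β] [Nonempty β]
    (hα : IsDenseColoring P cα) (hβ : IsDenseColoring P cβ) : ColoredIso cα cβ := by
  cases nonempty_encodable (α ⊕ β)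
  let cofinals : α ⊕ β → Order.Cofinal (ColoredPartialIso cα cβ) :=
    Sum.elim (ColoredPartialIso.definedAtLeft hα.mem hβ)
      (ColoredPartialIso.definedAtRight hα hβ.mem)
  let I := Order.idealOfCofinals default cofinals
  have forth (x : α) : ∃ y, ∃ f ∈ I, (x, y) ∈ f.1 := by
    obtain ⟨f, ⟨y, hy⟩, hf⟩ := Order.cofinal_meets_idealOfCofinals default cofinals (.inl x)
    exact ⟨y, f, hf, hy⟩
  have back (y : β) : ∃ x, ∃ f ∈ I, (x, y) ∈ f.1 := by
    obtain ⟨f, ⟨x, hx⟩, hf⟩ := Order.cofinal_meets_idealOfCofinals default cofinals (.inr y)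
    exact ⟨x, f, hf, hx⟩
  choose F hF using forth
  choose G hG using back
  have cmp_eq (x : α) (y : β) : cmp x (G y) = cmp (F x) y := by
    obtain ⟨f, hf, hxf⟩ := hF x
    obtain ⟨g, hg, hyg⟩ := hG y
    obtain ⟨m, -, hfm, hgm⟩ := I.directed _ hf _ hg
    exact m.2.2 _ (hfm hxf) _ (hgm hyg)
  refine ⟨OrderIso.ofCmpEqCmp F G cmp_eq, fun x => ?_⟩
  obtain ⟨f, -, hxf⟩ := hF x
  exact f.2.1 _ hxf

theorem of_restrict_Ioi_bot [OrderBot α] [OrderBot β]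
    (h : ColoredIso (fun x : Set.Ioi (⊥ : α) => cα x) (fun y : Set.Ioi (⊥ : β) => cβ y))
    (hbot : cβ ⊥ = cα ⊥) : ColoredIso cα cβ := by
  classical
  obtain ⟨e, he⟩ := h
  let f (x : α) : β := if hx : ⊥ < x then e ⟨x, hx⟩ else ⊥
  have f_of_bot_lt {x : α} (hx : ⊥ < x) : f x = e ⟨x, hx⟩ := dif_pos hx
  have f_bot : f ⊥ = ⊥ := dif_neg (lt_irrefl ⊥)
  have hf : StrictMono f := by
    intro x y hxy
    have hy : ⊥ < y := hxy.bot_lt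
    rw [f_of_bot_lt hy]
    rcases eq_bot_or_bot_lt x with rfl | hx
    · rw [f_bot]
      exact (e ⟨y, hy⟩).2
    · rw [f_of_bot_lt hx]
      exact e.strictMono (Subtype.mk_lt_mk.2 hxy)
  have hf_surj : Function.Surjective f := by
    intro y
    rcases eq_bot_or_bot_lt y with rfl | hy
    · exact ⟨⊥, f_bot⟩
    · obtain ⟨x, hx⟩ := e.surjective ⟨y, hy⟩
      exact ⟨x, by rw [f_of_bot_lt x.2, hx]⟩
  refine ⟨hf.orderIsoOfSurjective f hf_surj, fun x => ?_⟩
  change cβ (f x) = cα x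
  rcases eq_bot_or_bot_lt x with rfl | hx
  · rw [f_bot, hbot]
  · rw [f_of_bot_lt hx]
    exact he ⟨x, hx⟩

theorem of_orderBot [Countable α] [OrderBot α] [NoMaxOrder α]
    [Countable β] [OrderBot β] [NoMaxOrder β]
    (hα : IsDenseColoring P cα) (hβ : IsDenseColoring P cβ) (hbot : cβ ⊥ = cα ⊥) :
    ColoredIso cα cβ :=
  have := hα.denselyOrdered
  have := hβ.denselyOrdered
  of_restrict_Ioi_bot (of_isDenseColoring (hα.restrict_Ioi ⊥) (hβ.restrict_Ioi ⊥)) hbot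

theorem of_orderTop [Countable α] [OrderTop α] [NoMinOrder α]
    [Countable β] [OrderTop β] [NoMinOrder β]
    (hα : IsDenseColoring P cα) (hβ : IsDenseColoring P cβ) (htop : cβ ⊤ = cα ⊤) :
    ColoredIso cα cβ :=
  let ⟨e, he⟩ := of_orderBot hα.dual hβ.dual htop
  ⟨OrderIso.dual e, he⟩

end ColoredIso

end

/-- `a Γ^η` is modeled on `Fin 1 ⊕ₗ ℚ` (one `a`-colored
point followed by `Γ^η`), its `ω`-power on `ℕ ×ₗ (Fin 1 ⊕ₗ ℚ)`; dually `Γ^η a`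
on `ℚ ⊕ₗ Fin 1` and its `ω̄`-power on `ℕᵒᵈ ×ₗ (ℚ ⊕ₗ Fin 1)`. -/
theorem letter_shuffle_powers_general {S : Type*} (Γ : Finset S)
    (a : S) (ha : a ∈ Γ)
    (d : ℕ → ℚ → S) (hd : ∀ n, GammaEta Γ (d n)) (c : ℚ → S) (hc : GammaEta Γ c)
    (d' : ℕᵒᵈ → ℚ → S) (hd' : ∀ n, GammaEta Γ (d' n)) (c' : ℚ → S) (hc' : GammaEta Γ c') :
    ColoredIso
      (fun x : ℕ ×ₗ (Fin 1 ⊕ₗ ℚ) =>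
        Sum.elim (fun _ => a) (d (ofLex x).1) (ofLex (ofLex x).2))
      (fun y : Fin 1 ⊕ₗ ℚ => Sum.elim (fun _ => a) c (ofLex y)) ∧
    ColoredIso
      (fun x : ℕᵒᵈ ×ₗ (ℚ ⊕ₗ Fin 1) =>
        Sum.elim (d' (ofLex x).1) (fun _ => a) (ofLex (ofLex x).2))
      (fun y : ℚ ⊕ₗ Fin 1 => Sum.elim c' (fun _ => a) (ofLex y)) := by
  have point : IsDenseColoring (Γ : Set S) (fun _ : Fin 1 => a) :=
    IsDenseColoring.of_subsingleton ha
  constructor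
  · refine ColoredIso.of_orderBot ?_ (point.sumLex_of_noMinOrder hc.isDenseColoring) rfl
    exact IsDenseColoring.prodLex_of_noMaxOrder fun n =>
      point.sumLex_of_noMinOrder (hd n).isDenseColoring
  · refine ColoredIso.of_orderTop ?_ (hc'.isDenseColoring.sumLex_of_noMaxOrder point) rfl
    exact IsDenseColoring.prodLex_of_noMinOrder fun n =>
      (hd' n).isDenseColoring.sumLex_of_noMaxOrder point

/-- For finite nonempty `Γ` and `a ∈ Γ`: `(a Γ^η)^ω ≅ a Γ^η` and
`(Γ^η a)^{ω̄} ≅ Γ^η a`. Here `a Γ^η` is modeled on `Fin 1 ⊕ₗ ℚ` (one `a`-colored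
point followed by `Γ^η`), its `ω`-power on `ℕ ×ₗ (Fin 1 ⊕ₗ ℚ)`; dually `Γ^η a`
on `ℚ ⊕ₗ Fin 1` and its `ω̄`-power on `ℕᵒᵈ ×ₗ (ℚ ⊕ₗ Fin 1)`. -/
theorem letter_shuffle_powers {S : Type*} (Γ : Finset S) (hΓ : Γ.Nonempty)
    (a : S) (ha : a ∈ Γ)
    (d : ℕ → ℚ → S) (hd : ∀ n, GammaEta Γ (d n)) (c : ℚ → S) (hc : GammaEta Γ c)
    (d' : ℕᵒᵈ → ℚ → S) (hd' : ∀ n, GammaEta Γ (d' n)) (c' : ℚ → S) (hc' : GammaEta Γ c') :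
    ColoredIso
      (fun x : ℕ ×ₗ (Fin 1 ⊕ₗ ℚ) =>
        Sum.elim (fun _ => a) (d (ofLex x).1) (ofLex (ofLex x).2))
      (fun y : Fin 1 ⊕ₗ ℚ => Sum.elim (fun _ => a) c (ofLex y)) ∧
    ColoredIso
      (fun x : ℕᵒᵈ ×ₗ (ℚ ⊕ₗ Fin 1) =>
        Sum.elim (d' (ofLex x).1) (fun _ => a) (ofLex (ofLex x).2))
      (fun y : ℚ ⊕ₗ Fin 1 => Sum.elim c' (fun _ => a) (ofLex y)) :=
  letter_shuffle_powers_general Γ a ha d hd c hc d' hd' c' hc'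
end

section
/- Every countable tree T that has only finitely many subtrees up to isomorphism is isomorphic (as a partial order) to the prefix order (L; ≤_pref) for some regular language L ⊆ Σ* over a finite alphabet Σ with ε ∈ L. -/
/-!
Label every node `a` by the isomorphism type `τ a` of the subtree above it. There are finitely
many labels, and the number `m p q ∈ ℕ∞` of children with label `q` of a node depends only on
the node's label `p`. Number the children of label `q` of each node by `0, 1, 2, …` and write
child number `i` as one letter `(p, q, i)` when `m p q` is finite, and in unary, `moreⁱ last`,
when it is infinite: the alphabet stays finite and the words of siblings are prefix-incomparable.
Concatenating these words along the path from the root then embeds the tree into the prefix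
order, and its image is recognised by an automaton whose states are the labels, plus one state
per label for reading a unary word.
-/

class IsTreeOrder (A : Type*) [PartialOrder A] : Prop where
  finite_Iic : ∀ a : A, (Set.Iic a).Finite
  isChain_Iic : ∀ a : A, IsChain (· ≤ ·) (Set.Iic a)

namespace IsTreeOrder

variable {A : Type*} [PartialOrder A] [IsTreeOrder A]

instance : WellFoundedLT A :=
  ⟨Subrelation.wf (fun {a b} (hab : a < b) =>
      Set.ncard_lt_ncard (Set.Iic_ssubset_Iic.2 hab) (finite_Iic b))
    (InvImage.wf (fun a : A => (Set.Iic a).ncard) wellFounded_lt)⟩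

theorem exists_covBy_of_not_isMin {a : A} (ha : ¬ IsMin a) : ∃ p, p ⋖ a := by
  obtain ⟨b, hb⟩ := not_isMin_iff.1 ha
  obtain ⟨p, hp⟩ := ((finite_Iic a).subset Set.Iio_subset_Iic_self).exists_maximal ⟨b, hb⟩
  exact ⟨p, hp.1, fun c hpc hca => (hp.2 hca hpc.le).not_gt hpc⟩

theorem eq_of_covBy_of_covBy {p p' a : A} (h : p ⋖ a) (h' : p' ⋖ a) : p = p' := by
  rcases (isChain_Iic a).total h.le h'.le with hle | hle
  · exact ((h.wcovBy.eq_or_eq hle h'.le).resolve_right h'.ne).symm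
  · exact (h'.wcovBy.eq_or_eq hle h.le).resolve_right h.ne

open Classical in
noncomputable def parent (a : A) : A := if h : ∃ p, p ⋖ a then h.choose else a

theorem parent_covBy {a : A} (ha : ¬ IsMin a) : parent a ⋖ a := by
  have h := exists_covBy_of_not_isMin ha
  rw [parent, dif_pos h]
  exact h.choose_spec

theorem parent_eq_of_covBy {p a : A} (h : p ⋖ a) : parent a = p :=
  eq_of_covBy_of_covBy (parent_covBy (not_isMin_of_lt h.lt)) h

theorem le_parent_of_lt {a b : A} (h : b < a) : b ≤ parent a := by
  have hpa := parent_covBy (not_isMin_of_lt h)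
  rcases (isChain_Iic a).total h.le hpa.le with hle | hle
  · exact hle
  · rcases hpa.wcovBy.eq_or_eq hle h.le with rfl | rfl
    · exact le_rfl
    · exact absurd h (lt_irrefl _)

section PathWord

variable {α : Type*} [OrderBot A] (code : A → List α)

open Classical in
attribute [local instance] WellFoundedLT.toWellFoundedRelation in
noncomputable def pathWord (a : A) : List α :=
  if h : a = ⊥ then [] else
    have := (parent_covBy (not_isMin_iff_ne_bot.2 h)).lt
    pathWord (parent a) ++ code a
termination_by a

@[simp] theorem pathWord_bot : pathWord code ⊥ = [] := by
  rw [pathWord, dif_pos rfl]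

theorem pathWord_of_covBy {p a : A} (h : p ⋖ a) :
    pathWord code a = pathWord code p ++ code a := by
  rw [pathWord, dif_neg h.lt.ne_bot]
  simp only [parent_eq_of_covBy h]

theorem pathWord_mono {a b : A} (h : a ≤ b) : pathWord code a <+: pathWord code b := by
  induction b using WellFoundedLT.induction with
  | ind b ih =>
    rcases h.eq_or_lt with rfl | hab
    · exact List.prefix_rfl
    · have hpb := parent_covBy (not_isMin_of_lt hab)
      rw [pathWord_of_covBy code hpb]
      exact (ih _ hpb.lt (le_parent_of_lt hab)).trans (List.prefix_append _ _)

variable {code}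

theorem le_of_pathWord_prefix (hne : ∀ p c, p ⋖ c → code c ≠ [])
    (hpf : ∀ p c c', p ⋖ c → p ⋖ c' → code c <+: code c' → c = c') {a b : A}
    (h : pathWord code a <+: pathWord code b) : a ≤ b := by
  induction a using WellFoundedLT.induction with
  | ind a ih =>
    rcases eq_or_ne a ⊥ with rfl | ha
    · exact bot_le
    have hpa := parent_covBy (not_isMin_iff_ne_bot.2 ha)
    rw [pathWord_of_covBy code hpa] at h
    have hpb : parent a < b := by
      refine (ih _ hpa.lt ((List.prefix_append _ _).trans h)).lt_of_ne ?_
      rintro rfl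
      exact hne _ _ hpa (List.append_right_eq_self.1 (h.eq_of_length_le (by simp)))
    obtain ⟨c, hpc, hcb⟩ := exists_covBy_le_of_lt hpb
    have hc : pathWord code (parent a) ++ code c <+: pathWord code b :=
      pathWord_of_covBy code hpc ▸ pathWord_mono code hcb
    rcases List.prefix_or_prefix_of_prefix h hc with hac | hca
    · rw [hpf _ _ _ hpa hpc ((List.prefix_append_right_inj _).1 hac)]
      exact hcb
    · rw [← hpf _ _ _ hpc hpa ((List.prefix_append_right_inj _).1 hca)]
      exact hcb

end PathWord

end IsTreeOrder

theorem Set.Countable.exists_bijOn_encard_lt {α : Type*} {s : Set α} (hs : s.Countable) :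
    ∃ f : α → ℕ, Set.BijOn f s {i | (i : ℕ∞) < s.encard} := by
  rcases s.finite_or_infinite with hfin | hinf
  · refine hfin.exists_bijOn_of_encard_eq ?_
    have : {i : ℕ | (i : ℕ∞) < s.encard} = Finset.range s.ncard := by
      ext i; simp [← hfin.cast_ncard_eq]
    rw [this, Set.encard_coe_eq_coe_finsetCard, Finset.card_range, hfin.cast_ncard_eq]
  · have : {i : ℕ | (i : ℕ∞) < s.encard} = Set.univ := by simp [hinf.encard_eq]
    rw [this]
    have := hs.to_subtype
    have := hinf.to_subtype
    obtain ⟨e⟩ : Nonempty (s ≃ ℕ) := inferInstance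
    classical
    refine ⟨fun x => if h : x ∈ s then e ⟨x, h⟩ else 0, Set.mapsTo_univ _ _, ?_, ?_⟩
    · intro x hx y hy hxy
      simpa [hx, hy] using hxy
    · intro n _
      exact ⟨e.symm n, (e.symm n).2, by simp⟩

def OrderIso.restrictIci {α β : Type*} [Preorder α] [Preorder β] (e : α ≃o β) (x : α) :
    Set.Ici x ≃o Set.Ici (e x) where
  toFun y := ⟨e y, e.le_iff_le.2 y.2⟩
  invFun y := ⟨e.symm y, e.le_symm_apply.2 y.2⟩
  left_inv y := by simp
  right_inv y := by simp
  map_rel_iff' := e.le_iff_le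

def Set.Ici.orderIsoIci {α : Type*} [Preorder α] {a : α} (x : Set.Ici a) :
    Set.Ici x ≃o Set.Ici (x : α) where
  toFun y := ⟨y.1, y.2⟩
  invFun y := ⟨⟨y.1, x.2.trans y.2⟩, y.2⟩
  left_inv _ := rfl
  right_inv _ := rfl
  map_rel_iff' := Iff.rfl

namespace TreeEncoding

open IsTreeOrder

section Rank

variable {A Q : Type*} [PartialOrder A] (τ : A → Q)

def children (a : A) (q : Q) : Set A := {c | a ⋖ c ∧ τ c = q}

def IsChildCount (m : Q → Q → ℕ∞) : Prop := ∀ a q, (children τ a q).encard = m (τ a) q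

variable [Countable A]

noncomputable def childIndex (a : A) (q : Q) : A → ℕ :=
  (Set.to_countable (children τ a q)).exists_bijOn_encard_lt.choose

theorem bijOn_childIndex (a : A) (q : Q) :
    Set.BijOn (childIndex τ a q) (children τ a q) {i | (i : ℕ∞) < (children τ a q).encard} :=
  (Set.to_countable (children τ a q)).exists_bijOn_encard_lt.choose_spec

variable [IsTreeOrder A]

noncomputable def rank (c : A) : ℕ := childIndex τ (parent c) (τ c) c

variable {τ}

theorem rank_lt {p c : A} (h : p ⋖ c) : (rank τ c : ℕ∞) < (children τ p (τ c)).encard := by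
  rw [rank, parent_eq_of_covBy h]
  exact (bijOn_childIndex τ p (τ c)).mapsTo ⟨h, rfl⟩

theorem eq_of_rank_eq {p c c' : A} (hc : p ⋖ c) (hc' : p ⋖ c') (hτ : τ c = τ c')
    (h : rank τ c = rank τ c') : c = c' := by
  rw [rank, rank, parent_eq_of_covBy hc, parent_eq_of_covBy hc', hτ] at h
  exact (bijOn_childIndex τ p (τ c')).injOn ⟨hc, hτ⟩ ⟨hc', rfl⟩ h

theorem exists_rank_eq {p : A} {q : Q} {i : ℕ} (hi : (i : ℕ∞) < (children τ p q).encard) :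
    ∃ c, p ⋖ c ∧ τ c = q ∧ rank τ c = i := by
  obtain ⟨c, ⟨hpc, rfl⟩, hci⟩ := (bijOn_childIndex τ p q).surjOn hi
  exact ⟨c, hpc, rfl, by rw [rank, parent_eq_of_covBy hpc, hci]⟩

theorem exists_child_of_lt {m : Q → Q → ℕ∞} (hm : IsChildCount τ m)
    {a : A} {q : Q} {i : ℕ} (hi : (i : ℕ∞) < m (τ a) q) : ∃ c, a ⋖ c ∧ τ c = q ∧ rank τ c = i :=
  exists_rank_eq (by rwa [hm])

end Rank

/-- `digit p q i` only exists for finite `m p q`, since `(⊤ : ℕ∞).toNat = 0`. -/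
inductive Letter (Q : Type*) (m : Q → Q → ℕ∞)
  | last (q : Q)
  | more (q : Q)
  | digit (p q : Q) (i : Fin (m p q).toNat)

namespace Letter

variable {Q : Type*} (m : Q → Q → ℕ∞)

instance [Finite Q] : Finite (Letter Q m) :=
  Finite.of_injective (β := Q ⊕ Q ⊕ Σ pq : Q × Q, Fin (m pq.1 pq.2).toNat)
    (fun
      | last q => .inl q
      | more q => .inr (.inl q)
      | digit p q i => .inr (.inr ⟨(p, q), i⟩))
    (by rintro (_ | _ | _) (_ | _ | _) h <;> simp_all)

/-- The word of child number `i` of label `q` below a node of label `p`; the final `[]` is a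
junk value that no actual child uses. -/
def childWord (p q : Q) (i : ℕ) : List (Letter Q m) :=
  if m p q = ⊤ then List.replicate i (more q) ++ [last q]
  else if h : i < (m p q).toNat then [digit p q ⟨i, h⟩] else []

open Classical in
/-- `some (.inl q)`: a whole path word of a node of label `q` has been read;
`some (.inr q)`: inside the unary word of a child of label `q`; `none`: rejected. -/
noncomputable def step : Option (Q ⊕ Q) → Letter Q m → Option (Q ⊕ Q)
  | some (.inl p), last q => if m p q = ⊤ then some (.inl q) else none
  | some (.inl p), more q => if m p q = ⊤ then some (.inr q) else none
  | some (.inl p), digit p' q _ => if p' = p then some (.inl q) else none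
  | some (.inr q), last q' => if q' = q then some (.inl q) else none
  | some (.inr q), more q' => if q' = q then some (.inr q) else none
  | _, _ => none

noncomputable def childWordDFA (q₀ : Q) : DFA (Letter Q m) (Option (Q ⊕ Q)) where
  step := step m
  start := some (.inl q₀)
  accept := Set.range (some ∘ .inl)

variable {m} {q₀ p q q' : Q} {i j : ℕ}

theorem childWord_of_ne_top (hm : m p q ≠ ⊤) (hi : (i : ℕ∞) < m p q) :
    childWord m p q i =
      [digit p q ⟨i, by rwa [← Nat.cast_lt (α := ℕ∞), ENat.natCast_toNat hm]⟩] := by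
  rw [childWord, if_neg hm, dif_pos]

theorem childWord_digit (i : Fin (m p q).toNat) : childWord m p q i = [digit p q i] := by
  have hm : m p q ≠ ⊤ := fun h => by simpa [h] using i.pos
  rw [childWord, if_neg hm, dif_pos i.2]

theorem childWord_ne_nil (hi : (i : ℕ∞) < m p q) : childWord m p q i ≠ [] := by
  by_cases hm : m p q = ⊤
  · simp [childWord, hm]
  · simp [childWord_of_ne_top hm hi]

theorem replicate_more_append_last_prefix
    (h : List.replicate i (more (m := m) q) ++ [last q] <+:
      List.replicate j (more q') ++ [last q']) :
    q = q' ∧ i = j := by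
  induction i generalizing j with
  | zero => cases j <;> simp_all [List.replicate_succ]
  | succ i ih =>
    cases j with
    | zero => simp [List.replicate_succ] at h
    | succ j =>
      simp only [List.replicate_succ, List.cons_append, List.cons_prefix_cons] at h
      exact (ih h.2).imp_right (congrArg _)

theorem childWord_prefix (hi : (i : ℕ∞) < m p q) (hj : (j : ℕ∞) < m p q')
    (h : childWord m p q i <+: childWord m p q' j) : q = q' ∧ i = j := by
  by_cases hm : m p q = ⊤ <;> by_cases hm' : m p q' = ⊤
  · rw [childWord, if_pos hm, childWord, if_pos hm'] at h
    exact replicate_more_append_last_prefix h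
  · rw [childWord, if_pos hm, childWord_of_ne_top hm' hj] at h
    cases i <;> simp [List.replicate_succ] at h
  · rw [childWord_of_ne_top hm hi, childWord, if_pos hm'] at h
    cases j <;> simp [List.replicate_succ] at h
  · rw [childWord_of_ne_top hm hi, childWord_of_ne_top hm' hj] at h
    obtain ⟨⟨-, rfl, hij⟩, -⟩ := by simpa only [List.cons_prefix_cons, digit.injEq] using h
    exact ⟨rfl, by simpa using hij⟩

theorem evalFrom_replicate_more (k : ℕ) :
    (childWordDFA m q₀).evalFrom (some (.inr q)) (List.replicate k (more q)) =
      some (.inr q) := by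
  induction k with
  | zero => rfl
  | succ k ih => simpa [List.replicate_succ, DFA.evalFrom_cons, childWordDFA, step] using ih

theorem evalFrom_childWord (hi : (i : ℕ∞) < m p q) :
    (childWordDFA m q₀).evalFrom (some (.inl p)) (childWord m p q i) = some (.inl q) := by
  by_cases hm : m p q = ⊤
  · rw [childWord, if_pos hm]
    cases i with
    | zero => simp [childWordDFA, step, hm]
    | succ k =>
      have hmore : (childWordDFA m q₀).step (some (.inl p)) (more q) = some (.inr q) := by
        simp [childWordDFA, step, hm]
      rw [List.replicate_succ, List.cons_append, DFA.evalFrom_cons, hmore,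
        DFA.evalFrom_of_append, evalFrom_replicate_more]
      simp [childWordDFA, step]
  · simp [childWord_of_ne_top hm hi, childWordDFA, step]

end Letter

section Encoding

open Letter

variable {A Q : Type*} [PartialOrder A] [OrderBot A] [IsTreeOrder A] [Countable A]
  (τ : A → Q) (m : Q → Q → ℕ∞)

noncomputable def encode : A → List (Letter Q m) :=
  pathWord fun c => childWord m (τ (parent c)) (τ c) (rank τ c)

def Reached (w : List (Letter Q m)) : Option (Q ⊕ Q) → Prop
  | none => True
  | some (.inl q) => ∃ a, encode τ m a = w ∧ τ a = q
  | some (.inr q) => ∃ a k, encode τ m a ++ List.replicate (k + 1) (more q) = w ∧ m (τ a) q = ⊤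

variable {τ m}

theorem encode_of_covBy {p c : A} (h : p ⋖ c) :
    encode τ m c = encode τ m p ++ childWord m (τ p) (τ c) (rank τ c) := by
  rw [encode, pathWord_of_covBy _ h, parent_eq_of_covBy h]

theorem encode_prefix_iff (hm : IsChildCount τ m) {a b : A} :
    encode τ m a <+: encode τ m b ↔ a ≤ b := by
  refine ⟨le_of_pathWord_prefix ?_ ?_, pathWord_mono _⟩
  · intro p c hpc
    rw [parent_eq_of_covBy hpc]
    exact childWord_ne_nil (hm p (τ c) ▸ rank_lt hpc)
  · intro p c c' hpc hpc' h
    rw [parent_eq_of_covBy hpc, parent_eq_of_covBy hpc'] at h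
    obtain ⟨hτ, hr⟩ := childWord_prefix (hm p _ ▸ rank_lt hpc) (hm p _ ▸ rank_lt hpc') h
    exact eq_of_rank_eq hpc hpc' hτ hr

theorem eval_encode (hm : IsChildCount τ m) (a : A) :
    (childWordDFA m (τ ⊥)).eval (encode τ m a) = some (.inl (τ a)) := by
  induction a using WellFoundedLT.induction with
  | ind a ih =>
    rcases eq_or_ne a ⊥ with rfl | ha
    · simp [encode, DFA.eval, childWordDFA]
    · have hpa := parent_covBy (not_isMin_iff_ne_bot.2 ha)
      rw [encode_of_covBy hpa, DFA.eval, DFA.evalFrom_of_append, ← DFA.eval, ih _ hpa.lt]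
      exact evalFrom_childWord (hm _ _ ▸ rank_lt hpa)

theorem reached_step_node (hm : IsChildCount τ m) (a : A)
    (x : Letter Q m) : Reached τ m (encode τ m a ++ [x]) (step m (some (.inl (τ a))) x) := by
  cases x with
  | last q =>
    by_cases hT : m (τ a) q = ⊤
    · have hi : ((0 : ℕ) : ℕ∞) < m (τ a) q := by simp [hT]
      obtain ⟨c, hac, rfl, hc⟩ := exists_child_of_lt hm hi
      simp only [step, if_pos hT]
      exact ⟨c, by rw [encode_of_covBy hac, hc, childWord, if_pos hT]; rfl, rfl⟩
    · simp only [step, if_neg hT]; trivial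
  | more q =>
    by_cases hT : m (τ a) q = ⊤
    · simp only [step, if_pos hT]; exact ⟨a, 0, rfl, hT⟩
    · simp only [step, if_neg hT]; trivial
  | digit p q i =>
    by_cases hp : p = τ a
    · subst hp
      obtain ⟨c, hac, rfl, hc⟩ := exists_child_of_lt hm
        ((Nat.cast_lt.2 i.2).trans_le (ENat.natCast_toNat_le_self _))
      simp only [step]
      exact ⟨c, by rw [encode_of_covBy hac, hc, childWord_digit], rfl⟩
    · simp only [step, if_neg hp]; trivial

theorem reached_step_unary (hm : IsChildCount τ m) {a : A} {q : Q}
    (hT : m (τ a) q = ⊤) (k : ℕ) (x : Letter Q m) :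
    Reached τ m (encode τ m a ++ List.replicate (k + 1) (more q) ++ [x])
      (step m (some (.inr q)) x) := by
  cases x with
  | last q' =>
    by_cases hq : q' = q
    · subst hq
      have hi : ((k + 1 : ℕ) : ℕ∞) < m (τ a) q' := by simp [hT]
      obtain ⟨c, hac, rfl, hc⟩ := exists_child_of_lt hm hi
      simp only [step]
      refine ⟨c, ?_, rfl⟩
      rw [encode_of_covBy hac, hc, childWord, if_pos hT, List.append_assoc]
    · simp only [step, if_neg hq]; trivial
  | more q' =>
    by_cases hq : q' = q
    · subst hq
      simp only [step]
      exact ⟨a, k + 1, by rw [List.replicate_succ', List.append_assoc], hT⟩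
    · simp only [step, if_neg hq]; trivial
  | digit => trivial

theorem Reached.append_singleton (hm : IsChildCount τ m)
    {w : List (Letter Q m)} {s : Option (Q ⊕ Q)} (hs : Reached τ m w s) (x : Letter Q m) :
    Reached τ m (w ++ [x]) (step m s x) := by
  rcases s with _ | q | q
  · trivial
  · obtain ⟨a, rfl, rfl⟩ := hs
    exact reached_step_node hm a x
  · obtain ⟨a, k, rfl, hT⟩ := hs
    exact reached_step_unary hm hT k x

theorem reached_eval (hm : IsChildCount τ m)
    (w : List (Letter Q m)) : Reached τ m w ((childWordDFA m (τ ⊥)).eval w) := by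
  induction w using List.reverseRecOn with
  | nil => exact ⟨⊥, pathWord_bot _, rfl⟩
  | append_singleton w x ih =>
    rw [DFA.eval_append_singleton]
    exact ih.append_singleton hm x

theorem accepts_childWordDFA (hm : IsChildCount τ m) :
    (childWordDFA m (τ ⊥)).accepts = Set.range (encode τ m) := by
  ext w
  rw [DFA.mem_accepts]
  constructor
  · rintro ⟨q, hq⟩
    have h := reached_eval hm w
    rw [← hq] at h
    obtain ⟨a, ha, -⟩ := h
    exact ⟨a, ha⟩
  · rintro ⟨a, rfl⟩
    exact ⟨τ a, (eval_encode hm a).symm⟩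

end Encoding

open Letter in
theorem exists_regular_language_orderIso_of_isChildCount {A Q : Type*} [PartialOrder A]
    [OrderBot A] [IsTreeOrder A] [Countable A] [Finite Q] (τ : A → Q) (m : Q → Q → ℕ∞)
    (hm : IsChildCount τ m) :
    ∃ (n : ℕ) (L : Language (Fin n)), L.IsRegular ∧ ([] : List (Fin n)) ∈ L ∧
      ∃ e : A ≃ {l : List (Fin n) // l ∈ L}, ∀ a b : A, a ≤ b ↔ (e a).1 <+: (e b).1 := by
  obtain ⟨n, ⟨σ⟩⟩ := Finite.exists_equiv_fin (Letter Q m)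
  let f (a : A) : List (Fin n) := (encode τ m a).map σ
  have hf (a b : A) : f a <+: f b ↔ a ≤ b :=
    (List.prefix_map_iff_of_injective σ.injective).trans (encode_prefix_iff hm)
  have hinj : f.Injective := fun a b h =>
    le_antisymm ((hf a b).1 (h ▸ List.prefix_rfl)) ((hf b a).1 (h ▸ List.prefix_rfl))
  refine ⟨n, Set.range f, ?_, ⟨⊥, by simp [f, encode]⟩, Equiv.ofInjective f hinj,
    fun a b => (hf a b).symm⟩
  have : Fintype Q := Fintype.ofFinite Q
  refine Language.isRegular_iff.2 ⟨_, inferInstance, (childWordDFA m (τ ⊥)).comap σ.symm, ?_⟩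
  rw [DFA.accepts_comap, accepts_childWordDFA hm]
  ext w
  constructor
  · rintro ⟨a, ha⟩
    exact ⟨a, by simp [f, ha, List.map_map]⟩
  · rintro ⟨a, rfl⟩
    exact ⟨a, by simp [f, List.map_map]⟩

section SubtreeType

variable {A : Type*} [PartialOrder A]

variable (A) in
def subtreeSetoid : Setoid A where
  r a b := Nonempty (Set.Ici a ≃o Set.Ici b)
  iseqv := ⟨fun _ => ⟨.refl _⟩, fun ⟨e⟩ => ⟨e.symm⟩, fun ⟨e⟩ ⟨f⟩ => ⟨e.trans f⟩⟩

variable (A) in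
abbrev SubtreeType := Quotient (subtreeSetoid A)

def subtreeType (a : A) : SubtreeType A := Quotient.mk _ a

theorem subtreeType_apply {a b : A} (φ : Set.Ici a ≃o Set.Ici b) (x : Set.Ici a) :
    subtreeType (φ x : A) = subtreeType (x : A) :=
  Quotient.sound ⟨(Set.Ici.orderIsoIci _).symm.trans ((φ.restrictIci x).symm.trans
    (Set.Ici.orderIsoIci x))⟩

theorem encard_children_subtreeType_eq (a : A) (q : SubtreeType A) :
    (children subtreeType a q).encard =
      {x : Set.Ici a | IsAtom x ∧ subtreeType (x : A) = q}.encard := by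
  rw [← Subtype.val_injective.injOn.encard_image]
  congr 1
  ext c
  constructor
  · rintro ⟨hac, hq⟩
    exact ⟨⟨c, hac.le⟩, ⟨Set.Ici.isAtom_iff.2 hac, hq⟩, rfl⟩
  · rintro ⟨x, ⟨hx, hq⟩, rfl⟩
    exact ⟨Set.Ici.isAtom_iff.1 hx, hq⟩

theorem encard_children_eq_of_orderIso {a b : A} (φ : Set.Ici a ≃o Set.Ici b)
    (q : SubtreeType A) :
    (children subtreeType a q).encard = (children subtreeType b q).encard := by
  rw [encard_children_subtreeType_eq, encard_children_subtreeType_eq,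
    ← Set.encard_preimage_of_bijective φ.bijective]
  congr 1
  ext x
  simp only [Set.mem_preimage, Set.mem_ofPred_eq, φ.isAtom_iff, subtreeType_apply]

noncomputable def childCount (p q : SubtreeType A) : ℕ∞ :=
  Quotient.liftOn p (fun a => (children subtreeType a q).encard)
    fun _ _ ⟨φ⟩ => encard_children_eq_of_orderIso φ q

end SubtreeType

end TreeEncoding

/-- Every countable tree (a countable partial order with a least element in which
every down-set `{b | b ≤ a}` is a finite chain) having only finitely many
subtrees up to isomorphism is isomorphic to the prefix order on a regular
language `L` over a finite alphabet with `ε ∈ L`. -/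
theorem regular_tree_iso_prefix_order_of_regular_language
    {A : Type*} [PartialOrder A] [Countable A]
    (hroot : ∃ r : A, ∀ a : A, r ≤ a)
    (hfin : ∀ a : A, (Set.Iic a).Finite)
    (hchain : ∀ a : A, IsChain (· ≤ ·) (Set.Iic a))
    (hsub : ∃ T : Finset A, ∀ a : A, ∃ t ∈ T,
      Nonempty ({b : A // a ≤ b} ≃o {b : A // t ≤ b})) :
    ∃ (n : ℕ) (L : Language (Fin n)), L.IsRegular ∧ ([] : List (Fin n)) ∈ L ∧
      ∃ e : A ≃ {l : List (Fin n) // l ∈ L},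
        ∀ a b : A, a ≤ b ↔ (e a).1 <+: (e b).1 := by
  obtain ⟨r, hr⟩ := hroot
  let _ : OrderBot A := { bot := r, bot_le := hr }
  have : IsTreeOrder A := ⟨hfin, hchain⟩
  obtain ⟨T, hT⟩ := hsub
  have : Finite (TreeEncoding.SubtreeType A) := by
    refine Finite.of_surjective (fun t : T => TreeEncoding.subtreeType (t : A))
      fun q => q.inductionOn fun a => ?_
    obtain ⟨t, ht, ⟨φ⟩⟩ := hT a
    exact ⟨⟨t, ht⟩, Quotient.sound ⟨φ.symm⟩⟩
  exact TreeEncoding.exists_regular_language_orderIso_of_isChildCount TreeEncoding.subtreeType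
    TreeEncoding.childCount fun _ _ => rfl
end

section
/- Let 𝒜 = (Q, Σ, δ, F) be a DFA without initial state, all of whose states we consider, with F ⊆ Q. Define for p, q ∈ F the relation p ≈ q iff (L(𝒜, p); ≤_pref) ≅ (L(𝒜, q); ≤_pref), where L(𝒜, p) is the language accepted from initial state p. For p ∈ F and C ⊆ F let K(𝒜, p, C) be the set of words labeling paths from p to a state in C with no intermediate final state, and n(p, C) ∈ ℕ ∪ {∞} its cardinality. Then ≈ is the coarsest equivalence relation R on F satisfying: for all (p, q) ∈ R and every R-equivalence class C, n(p, C) = n(q, C). -/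
/-- Run of a (partial) DFA `δ` from state `p` on word `w`. -/
def evalDFA {Q A : Type*} (δ : Q → A → Option Q) (p : Q) (w : List A) : Option Q :=
  w.foldl (fun s a => s.bind fun q => δ q a) (some p)

/-- `L(𝒜, p)`: the language accepted from state `p`. -/
def LangFrom {Q A : Type*} (δ : Q → A → Option Q) (F : Set Q) (p : Q) :
    Set (List A) := {w | ∃ q ∈ F, evalDFA δ p w = some q}

/-- `K(𝒜, p, C)`: nonempty words labeling a path from `p` to a state of `C`
with no intermediate final state. -/
def KSet {Q A : Type*} (δ : Q → A → Option Q) (F : Set Q) (p : Q) (C : Set Q) :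
    Set (List A) :=
  {w | w ≠ [] ∧ (∃ q ∈ C, evalDFA δ p w = some q) ∧
    ∀ u, u <+: w → u ≠ [] → u ≠ w → ∀ q', evalDFA δ p u = some q' → q' ∉ F}

/-- Isomorphism of the prefix-order trees `(L(𝒜,p); ≤_pref)` and `(L(𝒜,q); ≤_pref)`. -/
def TreeEquiv {Q A : Type*} (δ : Q → A → Option Q) (F : Set Q) (p q : Q) : Prop :=
  ∃ e : (LangFrom δ F p) ≃ (LangFrom δ F q),
    ∀ a b : LangFrom δ F p, (a : List A) <+: (b : List A) ↔
      ((e a : List A) <+: (e b : List A))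

/-- `R` is an equivalence relation on the final states `F`. -/
def EquivOnF {Q : Type*} (F : Set Q) (R : Q → Q → Prop) : Prop :=
  (∀ p q, R p q → p ∈ F ∧ q ∈ F) ∧ (∀ p ∈ F, R p p) ∧
    (∀ p q, R p q → R q p) ∧ ∀ p q r, R p q → R q r → R p r

/-- `R` satisfies the refinement condition: related states have the same number
`n(p, C) = |K(𝒜, p, C)|` of branches into every `R`-class `C`. -/
def CountCond {Q A : Type*} (δ : Q → A → Option Q) (F : Set Q)
    (R : Q → Q → Prop) : Prop :=
  ∀ p q, R p q → ∀ r ∈ F,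
    Cardinal.mk (KSet δ F p {q' | R r q'}) = Cardinal.mk (KSet δ F q {q' | R r q'})

/-!
Read from a final state `p`, every nonempty word of `L(𝒜, p)` factors uniquely as a block
`u ∈ K(𝒜, p, F)` (a child of the root of the tree) followed by a word of `L(𝒜, p')`, where `p'` is
the state reached by `u`: the subtree above `u` is the tree of `p'`. A tree isomorphism fixes the
root, hence permutes the blocks and matches their subtrees, so `≈` satisfies the counting
condition. Conversely, if `R` does, equal counts in every class give class-preserving bijections
`Φ p q` between the blocks of related states, and rewriting words block by block with `Φ`
(`transport`) is an isomorphism of prefix trees `L(𝒜, p) ≅ L(𝒜, q)`.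
-/

open Cardinal

namespace PrefixTree

variable {Q A : Type*}

def prefixRel (S : Set (List A)) (a b : S) : Prop := (a : List A) <+: b

def subtree (S : Set (List A)) (u : List A) : Set (List A) := {v | u ++ v ∈ S}

def IsRootChild (S : Set (List A)) (u : List A) : Prop :=
  u ≠ [] ∧ ∀ t ∈ S, t <+: u → t = [] ∨ t = u

lemma _root_.Equiv.exists_bijOn_eq {α : Type*} {s t : Set α} (e : s ≃ t) :
    ∃ φ : α → α, Set.BijOn φ s t ∧ ∀ x : s, φ x = e x := by
  classical
  refine ⟨fun a => if h : a ∈ s then e ⟨a, h⟩ else a, ⟨?_, ?_, ?_⟩, fun x => dif_pos x.2⟩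
  · intro a ha
    simp only [dif_pos ha, Subtype.coe_prop]
  · intro a ha b hb hab
    simp only [dif_pos ha, dif_pos hb] at hab
    exact congrArg Subtype.val (e.injective (Subtype.ext hab))
  · intro b hb
    exact ⟨e.symm ⟨b, hb⟩, (e.symm ⟨b, hb⟩).2, by simp⟩

lemma mk_eq_of_equiv_of_mem_iff {α : Type*} {S T S' T' : Set α} (e : S ≃ T)
    (hS : S' ⊆ S) (hT : T' ⊆ T) (h : ∀ a : S, (a : α) ∈ S' ↔ (e a : α) ∈ T') :
    #S' = #T' :=
  calc #S' = #{a : S // (a : α) ∈ S'} :=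
        (mk_congr (Equiv.subtypeSubtypeEquivSubtype fun h => hS h)).symm
    _ = #{b : T // (b : α) ∈ T'} := mk_congr (e.subtypeEquiv h)
    _ = #T' := mk_congr (Equiv.subtypeSubtypeEquivSubtype fun h => hT h)

section RelIso

variable {S T : Set (List A)}

lemma nonempty_relIso_of_surjective (f : S → T)
    (hf : ∀ a b, (f a : List A) <+: f b ↔ (a : List A) <+: b) (hsurj : Function.Surjective f) :
    Nonempty (prefixRel S ≃r prefixRel T) := by
  have hinj : Function.Injective f := fun a b hab => by
    have hab' := (hf a b).mp (by rw [hab])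
    exact Subtype.ext (hab'.eq_of_length (le_antisymm hab'.length_le
      ((hf b a).mp (by rw [hab])).length_le))
  exact ⟨⟨Equiv.ofBijective f ⟨hinj, hsurj⟩, fun {a b} => hf a b⟩⟩

lemma relIso_nil (e : prefixRel S ≃r prefixRel T) (hS : [] ∈ S) (hT : [] ∈ T) :
    (e ⟨[], hS⟩ : List A) = [] := by
  have h : prefixRel T (e ⟨[], hS⟩) (e (e.symm ⟨[], hT⟩)) := e.map_rel_iff.mpr List.nil_prefix
  rw [e.apply_symm_apply] at h
  exact List.prefix_nil.mp h

lemma isRootChild_map (e : prefixRel S ≃r prefixRel T) (hS : [] ∈ S) (hT : [] ∈ T) {a : S}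
    (ha : IsRootChild S a) : IsRootChild T (e a) := by
  obtain ⟨hne, hmin⟩ := ha
  have he_nil : e ⟨[], hS⟩ = ⟨[], hT⟩ := Subtype.ext (relIso_nil e hS hT)
  refine ⟨fun h => hne ?_, fun t ht hta => ?_⟩
  · have : e a = e ⟨[], hS⟩ := by rw [he_nil]; exact Subtype.ext h
    exact congrArg Subtype.val (e.injective this)
  · set b := e.symm ⟨t, ht⟩
    have heb : (e b : List A) = t := congrArg Subtype.val (e.apply_symm_apply _)
    have hba : prefixRel S b a := e.map_rel_iff.mp (by rw [prefixRel, heb]; exact hta)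
    rcases hmin b b.2 hba with h | h
    · left
      rw [← heb, show b = ⟨[], hS⟩ from Subtype.ext h, he_nil]
    · right
      rw [← heb, show b = a from Subtype.ext h]

lemma isRootChild_map_iff (e : prefixRel S ≃r prefixRel T) (hS : [] ∈ S) (hT : [] ∈ T)
    (a : S) : IsRootChild T (e a) ↔ IsRootChild S a :=
  ⟨fun h => by simpa using isRootChild_map e.symm hT hS h, isRootChild_map e hS hT⟩

lemma nonempty_subtree_relIso (e : prefixRel S ≃r prefixRel T) {u : List A} (hu : u ∈ S) :
    Nonempty (prefixRel (subtree S u) ≃r prefixRel (subtree T (e ⟨u, hu⟩))) := by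
  set u' : List A := (e ⟨u, hu⟩ : List A)
  let E (v : subtree S u) : List A := e ⟨u ++ (v : List A), v.2⟩
  have happ (v : subtree S u) : u' ++ (E v).drop u'.length = E v := by
    obtain ⟨t, ht⟩ : u' <+: E v := e.map_rel_iff.mpr (List.prefix_append _ _)
    rw [← ht]; simp
  refine nonempty_relIso_of_surjective (fun v => ⟨(E v).drop u'.length, by
      change _ ∈ T; rw [happ]; exact Subtype.coe_prop _⟩) (fun a b => ?_) (fun w => ?_)
  · calc _ ↔ u' ++ _ <+: u' ++ _ := (List.prefix_append_right_inj _).symm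
      _ ↔ E a <+: E b := by rw [happ, happ]
      _ ↔ u ++ (a : List A) <+: u ++ b := e.map_rel_iff
      _ ↔ _ := List.prefix_append_right_inj _
  · set x := e.symm ⟨u' ++ w, w.2⟩
    have hex : e x = ⟨u' ++ w, w.2⟩ := e.apply_symm_apply _
    obtain ⟨v, hv⟩ : u <+: x :=
      (e.map_rel_iff (a := ⟨u, hu⟩) (b := x)).mp (by rw [hex]; exact List.prefix_append _ _)
    have hv' : u ++ v ∈ S := hv ▸ x.2
    refine ⟨⟨v, hv'⟩, Subtype.ext ?_⟩
    have : E ⟨v, hv'⟩ = u' ++ w := by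
      simp only [E, show (⟨u ++ v, hv'⟩ : S) = x from Subtype.ext hv, hex]
    simp [this]

end RelIso

section Automaton

variable {δ : Q → A → Option Q} {F : Set Q} {p q r : Q} {u v : List A}

lemma evalDFA_append_of_eq_some (h : evalDFA δ p u = some r) (v : List A) :
    evalDFA δ p (u ++ v) = evalDFA δ r v := by
  simp only [evalDFA] at h ⊢
  rw [List.foldl_append, h]

lemma nil_mem_langFrom (hp : p ∈ F) : [] ∈ LangFrom δ F p := ⟨p, hp, rfl⟩

lemma append_mem_langFrom_iff (h : evalDFA δ p u = some r) :
    u ++ v ∈ LangFrom δ F p ↔ v ∈ LangFrom δ F r := by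
  simp only [LangFrom, Set.mem_ofPred_eq, evalDFA_append_of_eq_some h]

lemma subtree_langFrom (h : evalDFA δ p u = some r) :
    subtree (LangFrom δ F p) u = LangFrom δ F r :=
  Set.ext fun _ => append_mem_langFrom_iff h

lemma treeEquiv_iff : TreeEquiv δ F p q ↔
    Nonempty (prefixRel (LangFrom δ F p) ≃r prefixRel (LangFrom δ F q)) :=
  ⟨fun ⟨e, he⟩ => ⟨⟨e, (he _ _).symm⟩⟩, fun ⟨e⟩ => ⟨e.toEquiv, fun _ _ => e.map_rel_iff.symm⟩⟩

lemma _root_.TreeEquiv.refl (δ : Q → A → Option Q) (F : Set Q) (p : Q) : TreeEquiv δ F p p :=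
  treeEquiv_iff.mpr ⟨RelIso.refl _⟩

lemma _root_.TreeEquiv.symm (h : TreeEquiv δ F p q) : TreeEquiv δ F q p :=
  let ⟨e⟩ := treeEquiv_iff.mp h
  treeEquiv_iff.mpr ⟨e.symm⟩

lemma _root_.TreeEquiv.trans (h : TreeEquiv δ F p q) (h' : TreeEquiv δ F q r) : TreeEquiv δ F p r :=
  let ⟨e⟩ := treeEquiv_iff.mp h
  let ⟨e'⟩ := treeEquiv_iff.mp h'
  treeEquiv_iff.mpr ⟨e.trans e'⟩

lemma equivOnF_treeEquiv (δ : Q → A → Option Q) (F : Set Q) :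
    EquivOnF F (fun p q => p ∈ F ∧ q ∈ F ∧ TreeEquiv δ F p q) :=
  ⟨fun _ _ h => ⟨h.1, h.2.1⟩, fun p hp => ⟨hp, hp, .refl δ F p⟩,
    fun _ _ h => ⟨h.2.1, h.1, h.2.2.symm⟩, fun _ _ _ h h' => ⟨h.1, h'.2.1, h.2.2.trans h'.2.2⟩⟩

lemma treeEquiv_of_relIso (e : prefixRel (LangFrom δ F p) ≃r prefixRel (LangFrom δ F q))
    {s s' : Q} (hu : u ∈ LangFrom δ F p) (hs : evalDFA δ p u = some s)
    (hs' : evalDFA δ q (e ⟨u, hu⟩) = some s') : TreeEquiv δ F s s' := by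
  rw [treeEquiv_iff, ← subtree_langFrom hs, ← subtree_langFrom hs']
  exact nonempty_subtree_relIso e hu

lemma mem_KSet_iff {C : Set Q} (h : evalDFA δ p u = some r) :
    u ∈ KSet δ F p C ↔ IsRootChild (LangFrom δ F p) u ∧ r ∈ C := by
  simp only [KSet, IsRootChild, LangFrom, Set.mem_ofPred_eq, h, Option.some.injEq]
  constructor
  · rintro ⟨hne, ⟨_, hC, rfl⟩, hmin⟩
    refine ⟨⟨hne, fun t ⟨s, hs, ht⟩ htu => ?_⟩, hC⟩
    by_contra! hne'
    exact hmin t htu hne'.1 hne'.2 s ht hs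
  · rintro ⟨⟨hne, hmin⟩, hC⟩
    refine ⟨hne, ⟨r, hC, rfl⟩, fun t htu htne htu' s ht hs => ?_⟩
    rcases hmin t ⟨s, hs, ht⟩ htu with h | h <;> contradiction

lemma countCond_treeEquiv (δ : Q → A → Option Q) (F : Set Q) :
    CountCond δ F (fun p q => p ∈ F ∧ q ∈ F ∧ TreeEquiv δ F p q) := by
  rintro p q ⟨hp, hq, hpq⟩ r hr
  obtain ⟨e⟩ := treeEquiv_iff.mp hpq
  have hsub (p : Q) : KSet δ F p {s | r ∈ F ∧ s ∈ F ∧ TreeEquiv δ F r s} ⊆ LangFrom δ F p :=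
    fun _ ⟨_, ⟨s, hs, hev⟩, _⟩ => ⟨s, hs.2.1, hev⟩
  refine mk_eq_of_equiv_of_mem_iff e.toEquiv (hsub p) (hsub q) fun a => ?_
  have ⟨s, hsF, hs⟩ := a.2
  have ⟨s', hs'F, hs'⟩ := (e a).2
  have hss' := treeEquiv_of_relIso e a.2 hs hs'
  change (a : List A) ∈ _ ↔ (e a : List A) ∈ _
  rw [mem_KSet_iff hs, mem_KSet_iff hs',
    isRootChild_map_iff e (nil_mem_langFrom hp) (nil_mem_langFrom hq)]
  exact and_congr_right fun _ =>
    ⟨fun h => ⟨hr, hs'F, h.2.2.trans hss'⟩, fun h => ⟨hr, hsF, h.2.2.trans hss'.symm⟩⟩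

end Automaton

section Blocks

variable {δ : Q → A → Option Q} {F : Set Q} {p r : Q} {u u' v v' w : List A}

variable (δ) in
noncomputable def stateAfter (p : Q) (u : List A) : Q := (evalDFA δ p u).getD p

lemma stateAfter_eq (h : evalDFA δ p u = some r) : stateAfter δ p u = r := by
  simp [stateAfter, h]

lemma evalDFA_eq_stateAfter {C : Set Q} (hu : u ∈ KSet δ F p C) :
    evalDFA δ p u = some (stateAfter δ p u) ∧ stateAfter δ p u ∈ C := by
  obtain ⟨-, ⟨r, hr, h⟩, -⟩ := hu
  rw [stateAfter_eq h]
  exact ⟨h, hr⟩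

lemma mem_KSet_iff_of_subset {C : Set Q} (hC : C ⊆ F) :
    u ∈ KSet δ F p C ↔ u ∈ KSet δ F p F ∧ stateAfter δ p u ∈ C := by
  constructor
  · rintro ⟨hne, ⟨r, hr, h⟩, hmin⟩
    exact ⟨⟨hne, ⟨r, hC hr, h⟩, hmin⟩, by rwa [stateAfter_eq h]⟩
  · rintro ⟨⟨hne, ⟨r, -, h⟩, hmin⟩, hr⟩
    exact ⟨hne, ⟨r, by rwa [stateAfter_eq h] at hr, h⟩, hmin⟩

lemma KSet_eq_of_prefix_of_prefix (hu : u ∈ KSet δ F p F) (hu' : u' ∈ KSet δ F p F)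
    (h : u <+: w) (h' : u' <+: w) : u = u' := by
  wlog huu : u <+: u' generalizing u u'
  · exact (this hu' hu h' h ((List.prefix_or_prefix_of_prefix h h').resolve_left huu)).symm
  by_contra hne
  obtain ⟨hne', ⟨r, hr, hev⟩, -⟩ := hu
  exact hu'.2.2 u huu hne' hne r hev hr

lemma append_prefix_append_iff (hu : u ∈ KSet δ F p F) (hu' : u' ∈ KSet δ F p F) :
    u ++ v <+: u' ++ v' ↔ u = u' ∧ v <+: v' := by
  constructor
  · intro h
    obtain rfl := KSet_eq_of_prefix_of_prefix hu hu' ((List.prefix_append u v).trans h)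
      (List.prefix_append u' v')
    exact ⟨rfl, (List.prefix_append_right_inj u).mp h⟩
  · rintro ⟨rfl, h⟩
    exact (List.prefix_append_right_inj u).mpr h

/-- A shortest nonempty prefix of `w` in `L(𝒜, p)` is a block. -/
lemma exists_KSet_prefix {w : List A} (hw : w ∈ LangFrom δ F p) (hne : w ≠ []) :
    ∃ u ∈ KSet δ F p F, u <+: w := by
  by_cases h : ∃ t, t <+: w ∧ t ≠ [] ∧ t ≠ w ∧ t ∈ LangFrom δ F p
  · obtain ⟨t, htw, htne, htw', ht⟩ := h
    have : t.length < w.length :=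
      lt_of_le_of_ne htw.length_le fun hl => htw' (htw.eq_of_length hl)
    obtain ⟨u, hu, hut⟩ := exists_KSet_prefix ht htne
    exact ⟨u, hu, hut.trans htw⟩
  · push Not at h
    obtain ⟨r, hr, hev⟩ := hw
    exact ⟨w, ⟨hne, ⟨r, hr, hev⟩, fun t htw htne htw' s hs hsF => h t htw htne htw' ⟨s, hsF, hs⟩⟩,
      List.prefix_rfl⟩
termination_by w.length

lemma exists_KSet_append (hw : w ∈ LangFrom δ F p) (hne : w ≠ []) :
    ∃ u ∈ KSet δ F p F, ∃ v ∈ LangFrom δ F (stateAfter δ p u), w = u ++ v := by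
  obtain ⟨u, hu, v, rfl⟩ := exists_KSet_prefix hw hne
  exact ⟨u, hu, v, (append_mem_langFrom_iff (evalDFA_eq_stateAfter hu).1).mp hw, rfl⟩

end Blocks

section Transport

variable {δ : Q → A → Option Q} {F : Set Q} {R : Q → Q → Prop} {Φ : Q → Q → List A → List A}

open Classical in
variable (δ F) in
noncomputable def transport (Φ : Q → Q → List A → List A) (p q : Q) (w : List A) : List A :=
  if h : ∃ u ∈ KSet δ F p F, u <+: w then
    Φ p q h.choose ++ transport Φ (stateAfter δ p h.choose) (stateAfter δ q (Φ p q h.choose))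
      (w.drop h.choose.length)
  else []
termination_by w.length
decreasing_by
  have := List.length_pos_iff.mpr h.choose_spec.1.1
  have := h.choose_spec.2.length_le
  simp only [List.length_drop]
  omega

lemma transport_nil {p q : Q} : transport δ F Φ p q [] = [] := by
  rw [transport, dif_neg]
  rintro ⟨u, hu, hpre⟩
  exact hu.1 (List.prefix_nil.mp hpre)

lemma transport_append {p q : Q} {u : List A} (hu : u ∈ KSet δ F p F) (v : List A) :
    transport δ F Φ p q (u ++ v) =
      Φ p q u ++ transport δ F Φ (stateAfter δ p u) (stateAfter δ q (Φ p q u)) v := by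
  have h : ∃ u' ∈ KSet δ F p F, u' <+: u ++ v := ⟨u, hu, List.prefix_append u v⟩
  have hchoose : h.choose = u :=
    KSet_eq_of_prefix_of_prefix h.choose_spec.1 hu h.choose_spec.2 (List.prefix_append u v)
  rw [transport, dif_pos h, hchoose, List.drop_left]

variable (δ F) in
def IsBlockBijection (R : Q → Q → Prop) (Φ : Q → Q → List A → List A) : Prop :=
  ∀ p q, R p q → Set.BijOn (Φ p q) (KSet δ F p F) (KSet δ F q F) ∧
    ∀ u ∈ KSet δ F p F, R (stateAfter δ p u) (stateAfter δ q (Φ p q u))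

lemma transport_mem (hΦ : IsBlockBijection δ F R Φ) {p q : Q} (hq : q ∈ F) (hpq : R p q)
    {w : List A} (hw : w ∈ LangFrom δ F p) : transport δ F Φ p q w ∈ LangFrom δ F q := by
  by_cases hne : w = []
  · rw [hne, transport_nil]
    exact nil_mem_langFrom hq
  obtain ⟨u, hu, v, hv, rfl⟩ := exists_KSet_append hw hne
  obtain ⟨hbij, htype⟩ := hΦ p q hpq
  obtain ⟨hev', hs'⟩ := evalDFA_eq_stateAfter (hbij.mapsTo hu)
  have : v.length < (u ++ v).length := by simp [List.length_pos_iff.mpr hu.1]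
  rw [transport_append hu, append_mem_langFrom_iff hev']
  exact transport_mem hΦ hs' (htype u hu) hv
termination_by w.length

lemma transport_prefix_iff (hΦ : IsBlockBijection δ F R Φ) {p q : Q} (hpq : R p q) {a b : List A}
    (ha : a ∈ LangFrom δ F p) (hb : b ∈ LangFrom δ F p) :
    transport δ F Φ p q a <+: transport δ F Φ p q b ↔ a <+: b := by
  by_cases ha' : a = []
  · simp [ha', transport_nil]
  obtain ⟨u, hu, v, hv, rfl⟩ := exists_KSet_append ha ha'
  obtain ⟨hbij, htype⟩ := hΦ p q hpq
  by_cases hb' : b = []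
  · simp [hb', transport_nil, transport_append hu, hu.1, (hbij.mapsTo hu).1]
  obtain ⟨u', hu', v', hv', rfl⟩ := exists_KSet_append hb hb'
  have : v.length < (u ++ v).length := by simp [List.length_pos_iff.mpr hu.1]
  rw [transport_append hu, transport_append hu', append_prefix_append_iff (hbij.mapsTo hu)
    (hbij.mapsTo hu'), append_prefix_append_iff hu hu', hbij.injOn.eq_iff hu hu']
  refine and_congr_right ?_
  rintro rfl
  exact transport_prefix_iff hΦ (htype u hu) hv hv'
termination_by a.length

lemma exists_transport_eq (hΦ : IsBlockBijection δ F R Φ) {p q : Q} (hp : p ∈ F) (hpq : R p q)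
    {y : List A} (hy : y ∈ LangFrom δ F q) :
    ∃ w ∈ LangFrom δ F p, transport δ F Φ p q w = y := by
  by_cases hne : y = []
  · exact ⟨[], nil_mem_langFrom hp, by rw [hne, transport_nil]⟩
  obtain ⟨u', hu', v', hv', rfl⟩ := exists_KSet_append hy hne
  obtain ⟨hbij, htype⟩ := hΦ p q hpq
  obtain ⟨u, hu, rfl⟩ := hbij.surjOn hu'
  obtain ⟨hev, hs⟩ := evalDFA_eq_stateAfter hu
  have : v'.length < (Φ p q u ++ v').length := by simp [List.length_pos_iff.mpr hu'.1]
  obtain ⟨v, hv, rfl⟩ := exists_transport_eq hΦ hs (htype u hu) hv'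
  exact ⟨u ++ v, (append_mem_langFrom_iff hev).mpr hv, transport_append hu v⟩
termination_by y.length

lemma treeEquiv_of_isBlockBijection (hΦ : IsBlockBijection δ F R Φ) {p q : Q} (hp : p ∈ F)
    (hq : q ∈ F) (hpq : R p q) : TreeEquiv δ F p q := by
  rw [treeEquiv_iff]
  refine nonempty_relIso_of_surjective (fun w => ⟨_, transport_mem hΦ hq hpq w.2⟩)
    (fun a b => transport_prefix_iff hΦ hpq a.2 b.2) fun y => ?_
  obtain ⟨w, hw, hwy⟩ := exists_transport_eq hΦ hp hpq y.2
  exact ⟨⟨w, hw⟩, Subtype.ext hwy⟩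

end Transport

section Counting

variable {δ : Q → A → Option Q} {F : Set Q} {R : Q → Q → Prop}

lemma _root_.EquivOnF.setOf_eq_setOf_iff (hR : EquivOnF F R) {s t : Q} (hs : s ∈ F) :
    {x | R t x} = {x | R s x} ↔ R s t := by
  obtain ⟨-, hrefl, hsymm, htrans⟩ := hR
  constructor
  · intro h
    have : s ∈ {x | R t x} := h ▸ hrefl s hs
    exact hsymm _ _ this
  · intro h
    ext x
    exact ⟨htrans _ _ _ h, htrans _ _ _ (hsymm _ _ h)⟩

lemma mk_fiber_eq_mk_KSet (hR : EquivOnF F R) (p : Q) {s : Q} (hs : s ∈ F) :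
    #{x : KSet δ F p F // {y | R (stateAfter δ p x) y} = {y | R s y}} =
      #(KSet δ F p {y | R s y}) := by
  have hsub : {y | R s y} ⊆ F := fun y hy => (hR.1 s y hy).2
  refine mk_congr ((Equiv.subtypeEquivRight fun x => ?_).trans
    (Equiv.subtypeSubtypeEquivSubtype fun h => ((mem_KSet_iff_of_subset hsub).mp h).1))
  rw [hR.setOf_eq_setOf_iff hs, mem_KSet_iff_of_subset hsub]
  exact (and_iff_right x.2).symm

lemma exists_classPreserving_equiv (hR : EquivOnF F R) (hCnt : CountCond δ F R) {p q : Q}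
    (hpq : R p q) : ∃ e : KSet δ F p F ≃ KSet δ F q F,
      ∀ x : KSet δ F p F, R (stateAfter δ p x) (stateAfter δ q (e x)) := by
  have hfib (C : Set Q) :
      Nonempty ({x : KSet δ F p F // {y | R (stateAfter δ p x) y} = C} ≃
        {x : KSet δ F q F // {y | R (stateAfter δ q x) y} = C}) := by
    by_cases hC : ∃ s ∈ F, C = {y | R s y}
    · obtain ⟨s, hs, rfl⟩ := hC
      exact Cardinal.eq.mp ((mk_fiber_eq_mk_KSet hR p hs).trans
        ((hCnt p q hpq s hs).trans (mk_fiber_eq_mk_KSet hR q hs).symm))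
    · have hempty (p : Q) : IsEmpty {x : KSet δ F p F // {y | R (stateAfter δ p x) y} = C} :=
        ⟨fun x => hC ⟨_, (evalDFA_eq_stateAfter x.1.2).2, x.2.symm⟩⟩
      exact ⟨Equiv.equivOfIsEmpty _ _⟩
  refine ⟨Equiv.ofFiberEquiv fun C => (hfib C).some, fun x => ?_⟩
  rw [← hR.setOf_eq_setOf_iff (evalDFA_eq_stateAfter x.2).2]
  exact Equiv.ofFiberEquiv_map (g := fun x : KSet δ F q F => {y | R (stateAfter δ q x) y}) _ x

lemma exists_isBlockBijection (hR : EquivOnF F R) (hCnt : CountCond δ F R) :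
    ∃ Φ, IsBlockBijection δ F R Φ := by
  have (p q : Q) (hpq : R p q) : ∃ φ : List A → List A,
      Set.BijOn φ (KSet δ F p F) (KSet δ F q F) ∧
        ∀ u ∈ KSet δ F p F, R (stateAfter δ p u) (stateAfter δ q (φ u)) := by
    obtain ⟨e, he⟩ := exists_classPreserving_equiv hR hCnt hpq
    obtain ⟨φ, hφ, hφe⟩ := e.exists_bijOn_eq
    exact ⟨φ, hφ, fun u hu => hφe ⟨u, hu⟩ ▸ he ⟨u, hu⟩⟩
  choose! Φ hΦ using this
  exact ⟨Φ, hΦ⟩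

lemma treeEquiv_of_countCond (hR : EquivOnF F R) (hCnt : CountCond δ F R) {p q : Q}
    (hpq : R p q) : TreeEquiv δ F p q :=
  have ⟨_, hΦ⟩ := exists_isBlockBijection hR hCnt
  treeEquiv_of_isBlockBijection hΦ (hR.1 p q hpq).1 (hR.1 p q hpq).2 hpq

end Counting

end PrefixTree

theorem tree_iso_is_coarsest_counting_equivalence_general {Q A : Type*}
    (δ : Q → A → Option Q) (F : Set Q) :
    (EquivOnF F (fun p q => p ∈ F ∧ q ∈ F ∧ TreeEquiv δ F p q) ∧
      CountCond δ F (fun p q => p ∈ F ∧ q ∈ F ∧ TreeEquiv δ F p q)) ∧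
    ∀ R : Q → Q → Prop, EquivOnF F R → CountCond δ F R →
      ∀ p q, R p q → p ∈ F ∧ q ∈ F ∧ TreeEquiv δ F p q :=
  ⟨⟨PrefixTree.equivOnF_treeEquiv δ F, PrefixTree.countCond_treeEquiv δ F⟩,
    fun _ hR hCnt p q hpq =>
      ⟨(hR.1 p q hpq).1, (hR.1 p q hpq).2, PrefixTree.treeEquiv_of_countCond hR hCnt hpq⟩⟩

/-- For a DFA without initial state, the relation `p ≈ q` iff
`(L(𝒜,p); ≤_pref) ≅ (L(𝒜,q); ≤_pref)` (on final states) is the **coarsest**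
equivalence relation `R` on `F` such that related states have equally many
branches into every `R`-class: `≈` itself is such a relation, and every such
relation is contained in `≈`. -/
theorem tree_iso_is_coarsest_counting_equivalence {Q A : Type*} [Fintype Q]
    (δ : Q → A → Option Q) (F : Set Q) :
    (EquivOnF F (fun p q => p ∈ F ∧ q ∈ F ∧ TreeEquiv δ F p q) ∧
      CountCond δ F (fun p q => p ∈ F ∧ q ∈ F ∧ TreeEquiv δ F p q)) ∧
    ∀ R : Q → Q → Prop, EquivOnF F R → CountCond δ F R →
      ∀ p q, R p q → p ∈ F ∧ q ∈ F ∧ TreeEquiv δ F p q :=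
  tree_iso_is_coarsest_counting_equivalence_general δ F
end
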